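/- arXiv:2010.00273 — 9 statements merged into one kernel-verified Lean document; each statement's English description precedes it below -/
import Mathlib

section
/- Let G be a connected finite simple graph of diameter two. Then for every edge e of G, either e lies on no cycle of G, or the minimum length of a cycle of G containing e is 3, 4, or 5 (that is, w_G(e) ∈ {3,4,5,∞} for every edge e). -/
/-- `cycleWeight G e` is the minimum length of a cycle of `G` containing the edge `e`
(`⊤` if no cycle of `G` contains `e`). This is the weight function `w_G(e)`. -/
noncomputable def cycleWeight {V : Type*} (G : SimpleGraph V) (e : Sym2 V) : ℕ∞ :=
  ⨅ (u : V) (p : G.Walk u u) (_ : p.IsCycle ∧ e ∈ p.edges), (p.length : ℕ∞)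

private lemma edist_step {V : Type*} {H : SimpleGraph V} {y x : V} {n : ℕ}
    (h : H.edist y x = (n : ℕ∞) + 1) : ∃ z, H.Adj y z ∧ H.edist z x = n := by
  have h' : H.edist y x = ((n + 1 : ℕ) : ℕ∞) := by rw [h]; push_cast; ring
  obtain ⟨p, hp⟩ := SimpleGraph.exists_walk_of_edist_eq_coe h'
  cases p with
  | nil => simp at hp
  | cons hadj q =>
    rename_i z
    have hq : q.length = n := by simpa using hp
    refine ⟨z, hadj, le_antisymm (hq ▸ q.edist_le) ?_⟩
    have h1 : H.edist y z ≤ 1 := by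
      have := (SimpleGraph.Walk.cons hadj SimpleGraph.Walk.nil).edist_le
      simpa using this
    have htri : H.edist y x ≤ H.edist y z + H.edist z x := SimpleGraph.edist_triangle
    have : (n : ℕ∞) + 1 ≤ 1 + H.edist z x := by
      calc (n : ℕ∞) + 1 = H.edist y x := h.symm
      _ ≤ H.edist y z + H.edist z x := htri
      _ ≤ 1 + H.edist z x := by gcongr
    rw [add_comm] at this
    exact (WithTop.add_le_add_iff_left (by simp : (1 : ℕ∞) ≠ ⊤)).mp this

/-- In a connected finite simple graph of diameter two, every edge `e`
satisfies `w_G(e) ∈ {3, 4, 5, ∞}`. -/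
theorem cycleWeight_mem_of_diam_two {V : Type*} [Fintype V] (G : SimpleGraph V)
    (hG : G.Connected) (hdiam : G.diam = 2) (e : Sym2 V) (he : e ∈ G.edgeSet) :
    cycleWeight G e = 3 ∨ cycleWeight G e = 4 ∨ cycleWeight G e = 5 ∨
      cycleWeight G e = ⊤ := by
  classical
  induction e using Sym2.ind with
  | _ x y =>
  by_cases hex : ∃ (u : V) (p : G.Walk u u), p.IsCycle ∧ s(x, y) ∈ p.edges
  · have hxy : G.Adj x y := (SimpleGraph.mem_edgeSet G).mp he
    set H := G \ SimpleGraph.fromEdgeSet {s(x, y)} with hH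
    have hreach : H.Reachable y x :=
      (SimpleGraph.adj_and_reachable_delete_edges_iff_exists_cycle.mpr hex).2.symm
    have hne : H.edist y x ≠ ⊤ := SimpleGraph.edist_ne_top_iff_reachable.mpr hreach
    obtain ⟨d, hd⟩ : ∃ d : ℕ, H.edist y x = d := by
      cases hde : H.edist y x with
      | top => exact absurd hde hne
      | coe d => exact ⟨d, rfl⟩
    -- useful: e is not an edge of H
    have heH : s(x, y) ∉ H.edgeSet := by
      rw [hH, SimpleGraph.edgeSet_sdiff]
      intro hmem
      exact hmem.2 (by simp [SimpleGraph.edgeSet_fromEdgeSet, hxy.ne])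
    have hd4 : d ≤ 4 := by
      by_contra hlt
      have h5 : 5 ≤ d := by omega
      have hd' : H.edist y x = ((d - 2 : ℕ) : ℕ∞) + 1 + 1 := by
        rw [hd]; norm_cast; omega
      obtain ⟨z1, hz1a, hz1⟩ := edist_step (n := d - 2 + 1) (by rw [hd']; push_cast; ring)
      obtain ⟨z2, hz2a, hz2⟩ := edist_step (n := d - 2) (by rw [hz1]; push_cast; ring)
      have hz2x : z2 ≠ x := by
        intro hzx
        rw [hzx, SimpleGraph.edist_self] at hz2
        have : (d - 2 : ℕ) = 0 := by exact_mod_cast hz2.symm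
        omega
      have hyz2 : ¬ H.edist y z2 ≤ 1 := by
        intro hle
        have htri : H.edist y x ≤ H.edist y z2 + H.edist z2 x := SimpleGraph.edist_triangle
        rw [hd, hz2] at htri
        have : (d : ℕ∞) ≤ 1 + (d - 2 : ℕ) := le_trans htri (by gcongr)
        have : (d : ℕ∞) ≤ ((1 + (d - 2) : ℕ) : ℕ∞) := by push_cast; exact this
        have : d ≤ 1 + (d - 2) := by exact_mod_cast this
        omega
      have hyz2' : H.edist y z2 ≤ 2 := by
        have := (SimpleGraph.Walk.cons hz1a (SimpleGraph.Walk.cons hz2a SimpleGraph.Walk.nil)).edist_le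
        simpa using this
      -- G-distance from x to z2 is at most 2
      have hgd : G.dist x z2 ≤ 2 := by
        have h1 : G.ediam ≠ ⊤ := SimpleGraph.ediam_ne_top_of_diam_ne_zero (by omega)
        have := SimpleGraph.dist_le_diam (G := G) h1 (u := x) (v := z2)
        omega
      obtain ⟨Q, hQ⟩ := hG.exists_walk_length_eq_dist x z2
      have hQ2 : Q.length ≤ 2 := by rw [hQ]; exact hgd
      by_cases heQ : s(x, y) ∈ Q.edges
      · -- analyze the short walk containing e
        cases Q with
        | nil => simp at heQ
        | cons h1 Q' =>
          rename_i a
          cases Q' with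
          | nil =>
            simp only [SimpleGraph.Walk.edges_cons, SimpleGraph.Walk.edges_nil,
              List.mem_singleton] at heQ
            rw [Sym2.eq_iff] at heQ
            rcases heQ with ⟨-, hy⟩ | ⟨hx, -⟩
            · exact hyz2 (by rw [hy, SimpleGraph.edist_self]; exact zero_le_one)
            · exact hz2x (by rw [← hx])
          | cons h2 Q'' =>
            rename_i b
            have hQ0 : Q''.length = 0 := by
              simp only [SimpleGraph.Walk.length_cons] at hQ2; omega
            cases Q'' with
            | cons h3 Q''' => simp at hQ0
            | nil =>
              simp only [SimpleGraph.Walk.edges_cons, SimpleGraph.Walk.edges_nil,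
                List.mem_cons, List.mem_singleton, List.not_mem_nil, or_false] at heQ
              rcases heQ with h | h
              · rw [Sym2.eq_iff] at h
                rcases h with ⟨-, hy⟩ | ⟨hx, hyx⟩
                · -- a = y, so y is adjacent to z2 in G; and this edge is not e
                  subst hy
                  have hedge : s(y, z2) ≠ s(x, y) := by
                    rw [Ne, Sym2.eq_iff]
                    rintro (⟨hyx, -⟩ | ⟨-, hzx⟩)
                    · exact hxy.ne hyx.symm
                    · exact hz2x hzx
                  have hadjH : H.Adj y z2 := by
                    rw [hH, SimpleGraph.sdiff_adj]
                    exact ⟨h2, fun hc => hedge (by simpa using ((SimpleGraph.fromEdgeSet_adj _).mp hc).1)⟩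
                  have := (SimpleGraph.Walk.cons hadjH SimpleGraph.Walk.nil).edist_le
                  exact hyz2 (by simpa using this)
                · exact absurd hyx.symm hxy.ne
              · rw [Sym2.eq_iff] at h
                rcases h with ⟨hax, -⟩ | ⟨hz2x', -⟩
                · exact h1.ne hax
                · exact hz2x hz2x'.symm
      · -- Q avoids e, so it lives in H
        have hsub : ∀ ed ∈ Q.edges, ed ∈ H.edgeSet := by
          intro ed hed
          rw [hH, SimpleGraph.edgeSet_sdiff]
          refine ⟨Q.edges_subset_edgeSet hed, fun hc => ?_⟩
          rw [SimpleGraph.edgeSet_fromEdgeSet] at hc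
          rcases hc with ⟨hc1, -⟩
          exact heQ (Set.mem_singleton_iff.mp hc1 ▸ hed)
        have hQH : H.edist x z2 ≤ 2 := by
          have := (Q.transfer H hsub).edist_le
          rw [SimpleGraph.Walk.length_transfer] at this
          exact le_trans this (by exact_mod_cast hQ2)
        have htri : H.edist y x ≤ H.edist y z2 + H.edist z2 x := SimpleGraph.edist_triangle
        rw [hd] at htri
        rw [SimpleGraph.edist_comm] at hQH
        have : (d : ℕ∞) ≤ 4 := le_trans htri (by
          calc H.edist y z2 + H.edist z2 x ≤ 2 + 2 := by gcongr
          _ = 4 := by norm_num)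
        have : d ≤ 4 := by exact_mod_cast this
        omega
    -- now build a cycle of length at most 5 through e
    obtain ⟨P, hP⟩ := hreach.exists_walk_length_eq_edist
    have hPl : P.length ≤ 4 := by
      have : (P.length : ℕ∞) ≤ 4 := by rw [hP, hd]; exact_mod_cast hd4
      exact_mod_cast this
    have hpl : P.bypass.length ≤ 4 := le_trans P.length_bypass_le hPl
    have hsubG : ∀ ed ∈ P.bypass.edges, ed ∈ G.edgeSet := by
      intro ed hed
      exact SimpleGraph.edgeSet_mono (sdiff_le) (P.bypass.edges_subset_edgeSet hed)
    set p' := P.bypass.transfer G hsubG with hp'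
    have hp'path : p'.IsPath := P.bypass_isPath.transfer hsubG
    have hep' : s(x, y) ∉ p'.edges := by
      rw [hp', SimpleGraph.Walk.edges_transfer]
      intro hmem
      exact heH (P.bypass.edges_subset_edgeSet hmem)
    have hcyc : (SimpleGraph.Walk.cons hxy p').IsCycle :=
      (SimpleGraph.Walk.cons_isCycle_iff p' hxy).mpr ⟨hp'path, hep'⟩
    have hmem : s(x, y) ∈ (SimpleGraph.Walk.cons hxy p').edges := by
      simp [SimpleGraph.Walk.edges_cons]
    have hup : cycleWeight G s(x, y) ≤ 5 := by
      have hle : cycleWeight G s(x, y) ≤ ((SimpleGraph.Walk.cons hxy p').length : ℕ∞) :=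
        iInf_le_of_le x (iInf_le_of_le (SimpleGraph.Walk.cons hxy p') (iInf_le _ ⟨hcyc, hmem⟩))
      refine le_trans hle ?_
      rw [SimpleGraph.Walk.length_cons, hp', SimpleGraph.Walk.length_transfer]
      exact_mod_cast Nat.succ_le_succ hpl
    have hlo : 3 ≤ cycleWeight G s(x, y) :=
      le_iInf fun u => le_iInf fun q => le_iInf fun hq => by
        exact_mod_cast hq.1.three_le_length
    cases hW : cycleWeight G s(x, y) with
    | top => rw [hW] at hup; simp at hup
    | coe n =>
      rw [hW] at hup hlo
      have h1 : n ≤ 5 := by exact_mod_cast hup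
      have h2 : 3 ≤ n := by exact_mod_cast hlo
      interval_cases n
      · left; rfl
      · right; left; rfl
      · right; right; left; rfl
  · right; right; right
    rw [cycleWeight, iInf_eq_top]
    intro u
    rw [iInf_eq_top]
    intro p
    rw [iInf_eq_top]
    intro hc
    exact absurd ⟨u, p, hc⟩ hex
end

section
/- Let G be a connected finite simple graph of diameter two and let e be an edge of G that lies on a triangle (i.e., w_G(e) = 3). Then the graph G − e obtained by deleting e is connected and has diameter 2 or 3. -/
open SimpleGraph

/-- Let `G` be a connected finite simple graph of diameter two and let
`e` be an edge of `G` with `w_G(e) = 3`. Then `G − e` is connected and has diameter 2 or 3. -/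
theorem deleteEdge_of_cycleWeight_three {V : Type*} [Fintype V] (G : SimpleGraph V)
    (hG : G.Connected) (hdiam : G.diam = 2) (e : Sym2 V) (he : e ∈ G.edgeSet)
    (hw : cycleWeight G e = 3) :
    (G.deleteEdges {e}).Connected ∧
      ((G.deleteEdges {e}).diam = 2 ∨ (G.deleteEdges {e}).diam = 3) := by
  classical
  set G' := G.deleteEdges {e} with hG'
  -- Step 1: extract a triangle through e.
  have htri : ∃ u : V, ∃ p : G.Walk u u, p.IsCycle ∧ e ∈ p.edges ∧ p.length = 3 := by
    by_contra hcon
    push_neg at hcon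
    have h4 : (4 : ℕ∞) ≤ cycleWeight G e := by
      refine le_iInf fun u => le_iInf fun p => le_iInf fun ⟨hc, hep⟩ => ?_
      have h3 := hc.three_le_length
      have hne := hcon u p hc hep
      have : 4 ≤ p.length := by omega
      exact_mod_cast this
    rw [hw] at h4
    norm_num at h4
  obtain ⟨u, p, hc, hep, hlen⟩ := htri
  -- Decompose the length-3 cycle.
  obtain ⟨a, b, c, hab, hac', hcb'⟩ :
      ∃ a b c : V, e = s(a, b) ∧ G'.Adj a c ∧ G'.Adj c b := by
    cases p with
    | nil => simp at hlen
    | cons h1 q =>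
      cases q with
      | nil => simp at hlen
      | cons h2 r =>
        cases r with
        | nil => simp at hlen
        | cons h3 t =>
          cases t with
          | cons h4 t' => simp at hlen
          | nil =>
            rename_i x y
            have hnodup := hc.edges_nodup
            simp only [Walk.edges_cons, Walk.edges_nil, List.nodup_cons, List.mem_cons,
              List.mem_singleton, List.not_mem_nil, not_false_iff, and_true, List.nodup_nil] at hnodup
            simp only [Walk.edges_cons, Walk.edges_nil, List.mem_cons, List.mem_singleton,
              List.not_mem_nil, or_false] at hep
            have n1 : u ≠ x := h1.ne
            have n2 : x ≠ y := h2.ne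
            have n3 : y ≠ u := h3.ne
            rcases hep with he1 | he2 | he3
            · refine ⟨u, x, y, he1, ?_, ?_⟩
              · exact SimpleGraph.deleteEdges_adj.mpr ⟨h3.symm, by
                  simp [he1, Sym2.eq_iff, n1, n2, n3, n1.symm, n2.symm, n3.symm]⟩
              · exact SimpleGraph.deleteEdges_adj.mpr ⟨h2.symm, by
                  simp [he1, Sym2.eq_iff, n1, n2, n3, n1.symm, n2.symm, n3.symm]⟩
            · refine ⟨x, y, u, he2, ?_, ?_⟩
              · exact SimpleGraph.deleteEdges_adj.mpr ⟨h1.symm, by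
                  simp [he2, Sym2.eq_iff, n1, n2, n3, n1.symm, n2.symm, n3.symm]⟩
              · exact SimpleGraph.deleteEdges_adj.mpr ⟨h3.symm, by
                  simp [he2, Sym2.eq_iff, n1, n2, n3, n1.symm, n2.symm, n3.symm]⟩
            · refine ⟨y, u, x, he3, ?_, ?_⟩
              · exact SimpleGraph.deleteEdges_adj.mpr ⟨h2.symm, by
                  simp [he3, Sym2.eq_iff, n1, n2, n3, n1.symm, n2.symm, n3.symm]⟩
              · exact SimpleGraph.deleteEdges_adj.mpr ⟨h1.symm, by
                  simp [he3, Sym2.eq_iff, n1, n2, n3, n1.symm, n2.symm, n3.symm]⟩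
  -- every G-adjacency yields G'-reachability
  have hstep : ∀ x y : V, G.Adj x y → G'.Reachable x y := by
    intro x y hxy
    by_cases hxe : s(x, y) = e
    · rw [hab] at hxe
      rcases Sym2.eq_iff.mp hxe with ⟨rfl, rfl⟩ | ⟨rfl, rfl⟩
      · exact hac'.reachable.trans hcb'.reachable
      · exact (hac'.reachable.trans hcb'.reachable).symm
    · exact (deleteEdges_adj.mpr ⟨hxy, by simpa using hxe⟩).reachable
  have hconn : G'.Connected := by
    have hpre : G'.Preconnected := by
      intro x y
      obtain ⟨q⟩ := hG.preconnected x y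
      induction q with
      | nil => exact Reachable.refl _
      | cons h q ih => exact (hstep _ _ h).trans ih
    exact (connected_iff G').mpr ⟨hpre, hG.nonempty⟩
  -- edist bounds
  have hetop : G.ediam ≠ ⊤ := by
    have : Nonempty V := hG.nonempty
    obtain ⟨x, y, hxy⟩ := G.exists_edist_eq_ediam_of_finite
    rw [← hxy]
    exact edist_ne_top_iff_reachable.mpr (hG.preconnected x y)
  have hediamG : G.ediam = 2 := by
    have := ENat.coe_toNat hetop
    rw [← this]
    rw [SimpleGraph.diam] at hdiam
    rw [hdiam]; rfl
  have hedge2 : ∀ x y : V, G.Adj x y → G'.edist x y ≤ 2 := by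
    intro x y hxy
    by_cases hxe : s(x, y) = e
    · rw [hab] at hxe
      have hacb : G'.edist a b ≤ 2 := by
        calc G'.edist a b ≤ G'.edist a c + G'.edist c b := SimpleGraph.edist_triangle
        _ ≤ 1 + 1 := add_le_add (edist_eq_one_iff_adj.mpr hac').le
              (edist_eq_one_iff_adj.mpr hcb').le
        _ = 2 := by norm_num
      rcases Sym2.eq_iff.mp hxe with ⟨rfl, rfl⟩ | ⟨rfl, rfl⟩
      · exact hacb
      · rwa [SimpleGraph.edist_comm]
    · have : G'.Adj x y := deleteEdges_adj.mpr ⟨hxy, by simpa using hxe⟩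
      exact (edist_eq_one_iff_adj.mpr this).le.trans (by norm_num)
  have hedge1 : ∀ x y : V, G.Adj x y → s(x, y) ≠ e → G'.edist x y ≤ 1 := by
    intro x y hxy hxe
    exact (edist_eq_one_iff_adj.mpr (deleteEdges_adj.mpr ⟨hxy, by simpa using hxe⟩)).le
  have hbound : ∀ x y : V, G'.edist x y ≤ 3 := by
    intro x y
    have hdle : G.dist x y ≤ 2 := hdiam ▸ dist_le_diam hetop
    obtain ⟨q, hq⟩ := hG.exists_walk_length_eq_dist x y
    rw [← hq] at hdle
    cases q with
    | nil => simp [SimpleGraph.edist_self]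
    | cons h1 r =>
      cases r with
      | nil => exact (hedge2 _ _ h1).trans (by norm_num)
      | cons h2 t =>
        cases t with
        | cons h3 t' => simp [Walk.length_cons] at hdle
        | nil =>
          rename_i m
          by_cases hxe1 : s(x, m) = e
          · by_cases hxe2 : s(m, y) = e
            · have : s(x, m) = s(m, y) := hxe1.trans hxe2.symm
              rcases Sym2.eq_iff.mp this with ⟨h', h''⟩ | ⟨rfl, -⟩
              · exact absurd h' h1.ne
              · simp [SimpleGraph.edist_self]
            · calc G'.edist x y ≤ G'.edist x m + G'.edist m y := SimpleGraph.edist_triangle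
                _ ≤ 2 + 1 := add_le_add (hedge2 _ _ h1) (hedge1 _ _ h2 hxe2)
                _ = 3 := by norm_num
          · calc G'.edist x y ≤ G'.edist x m + G'.edist m y := SimpleGraph.edist_triangle
              _ ≤ 1 + 2 := add_le_add (hedge1 _ _ h1 hxe1) (hedge2 _ _ h2)
              _ = 3 := by norm_num
  have hediam' : G'.ediam ≤ 3 := ediam_le_of_edist_le hbound
  have hge : (2 : ℕ∞) ≤ G'.ediam := hediamG ▸ ediam_anti (G.deleteEdges_le {e})
  have hne' : G'.ediam ≠ ⊤ := fun h => by rw [h] at hediam'; exact absurd hediam' (by norm_num)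
  have h2n : (2 : ℕ) ≤ G'.diam := by
    have := ENat.toNat_le_toNat hge hne'
    simpa [SimpleGraph.diam] using this
  have h3n : G'.diam ≤ 3 := by
    have := ENat.toNat_le_toNat hediam' (by norm_num : (3 : ℕ∞) ≠ ⊤)
    simpa [SimpleGraph.diam] using this
  exact ⟨hconn, by omega⟩
end

section
/- Let G be a connected finite simple graph of diameter two and let e be an edge of G such that the minimum length of a cycle of G containing e is exactly 4 (i.e., w_G(e) = 4). Then the graph G − e obtained by deleting e is connected and has diameter exactly 3. -/
open SimpleGraph Walk

namespace SimpleGraph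

variable {V : Type*} {G : SimpleGraph V} {u v : V}

lemma cycleWeight_le_length {e : Sym2 V} {w : V} {c : G.Walk w w} (hc : c.IsCycle)
    (he : e ∈ c.edges) : cycleWeight G e ≤ c.length :=
  iInf_le_of_le w <| iInf_le_of_le c <| iInf_le _ ⟨hc, he⟩

lemma Walk.IsCycle.edist_deleteEdges_snd_add_one_le {c : G.Walk u u} (hc : c.IsCycle) :
    (G.deleteEdges {s(u, c.snd)}).edist u c.snd + 1 ≤ c.length := by
  cases c with
  | nil => exact absurd hc not_isCycle_nil
  | cons h p =>
    obtain ⟨-, hp⟩ := (cons_isCycle_iff p h).mp hc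
    let q := (p.toDeleteEdges {s(u, _)} fun e he heq => hp (heq ▸ he)).reverse
    calc _ ≤ (q.length : ℕ∞) + 1 := by rw [snd_cons]; gcongr; exact edist_le q
      _ = _ := by simp [q]

lemma Walk.IsCycle.edist_deleteEdges_add_one_le {w : V} {c : G.Walk w w} (hc : c.IsCycle)
    (he : s(u, v) ∈ c.edges) : (G.deleteEdges {s(u, v)}).edist u v + 1 ≤ c.length := by
  classical
  have hu : u ∈ c.support := c.fst_mem_support_of_mem_edges he
  have hc' : (c.rotate u hu).IsCycle := hc.rotate hu
  have hv : v ∈ (c.rotate u hu).toSubgraph.neighborSet u := by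
    rw [Subgraph.mem_neighborSet, ← Subgraph.mem_edgeSet, mem_edges_toSubgraph,
      (c.rotate_edges u hu).mem_iff]
    exact he
  rw [hc'.neighborSet_toSubgraph_endpoint] at hv
  rw [← c.length_rotate u hu]
  rcases hv with rfl | rfl
  · exact hc'.edist_deleteEdges_snd_add_one_le
  · simpa [snd_reverse] using hc'.reverse.edist_deleteEdges_snd_add_one_le

lemma cycleWeight_le_edist_deleteEdges_add_one (h : G.Adj u v) :
    cycleWeight G s(u, v) ≤ (G.deleteEdges {s(u, v)}).edist u v + 1 := by
  classical
  by_cases htop : (G.deleteEdges {s(u, v)}).edist u v = ⊤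
  · simp [htop]
  obtain ⟨p, hp⟩ := exists_walk_of_edist_ne_top htop
  let q : G.Walk u v := p.bypass.mapLe (deleteEdges_le _)
  have hq : s(v, u) ∉ q.edges := by
    intro hmem
    rw [edges_mapLe_eq_edges] at hmem
    simpa [Sym2.eq_swap (a := v)] using p.bypass.edges_subset_edgeSet hmem
  have hcyc : (cons h.symm q).IsCycle :=
    (cons_isCycle_iff q h.symm).mpr ⟨(isPath_mapLe _).mpr p.bypass_isPath, hq⟩
  calc cycleWeight G s(u, v) ≤ (cons h.symm q).length :=
        cycleWeight_le_length hcyc (by simp [Sym2.eq_swap])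
    _ ≤ _ := by
        rw [← hp, length_cons]
        push_cast
        gcongr
        simpa [q] using p.length_bypass_le_length

theorem cycleWeight_eq_edist_deleteEdges_add_one (h : G.Adj u v) :
    cycleWeight G s(u, v) = (G.deleteEdges {s(u, v)}).edist u v + 1 :=
  (cycleWeight_le_edist_deleteEdges_add_one h).antisymm <|
    le_iInf fun _ => le_iInf fun _ => le_iInf fun hc => hc.1.edist_deleteEdges_add_one_le hc.2

lemma exists_adj_ne_of_one_lt_edist (h : 1 < G.edist u v) (htop : G.edist u v ≠ ⊤) :
    ∃ x, G.Adj u x ∧ x ≠ v := by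
  obtain ⟨p, hp⟩ := exists_walk_of_edist_ne_top htop
  cases p with
  | nil => simp_all
  | cons hux _ =>
    refine ⟨_, hux, ?_⟩
    rintro rfl
    simp [edist_eq_one_iff_adj.mpr hux] at h

lemma adj_deleteEdges_of_ne {a b : V} (h : G.Adj a b) (hau : a ≠ u) (hav : a ≠ v) :
    (G.deleteEdges {s(u, v)}).Adj a b := by
  simp [deleteEdges_adj, h, hau, hav]

lemma edist_deleteEdges_le_two {a b : V} (hau : a ≠ u) (hav : a ≠ v) (hbu : b ≠ u)
    (hbv : b ≠ v) (h : G.edist a b ≤ 2) : (G.deleteEdges {s(u, v)}).edist a b ≤ 2 := by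
  obtain ⟨p, hp⟩ := exists_walk_of_edist_ne_top (h.trans_lt (by decide)).ne
  have hlen : p.length ≤ 2 := by exact_mod_cast hp ▸ h
  cases p with
  | nil => simp
  | cons hac q =>
    cases q with
    | nil => exact (edist_le (cons (adj_deleteEdges_of_ne hac hau hav) nil)).trans (by simp)
    | cons hcb r =>
      cases r with
      | nil =>
        simpa using edist_le (cons (adj_deleteEdges_of_ne hac hau hav)
          (cons (adj_deleteEdges_of_ne hcb.symm hbu hbv).symm nil))
      | cons _ _ => simp at hlen

lemma edist_deleteEdges_le_three (hG : G.ediam ≤ 2)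
    (huv : (G.deleteEdges {s(u, v)}).edist u v = 3) (a b : V) :
    (G.deleteEdges {s(u, v)}).edist a b ≤ 3 := by
  set H := G.deleteEdges {s(u, v)}
  have hfar {a b : V} (hau : a ≠ u) (hav : a ≠ v) (hbu : b ≠ u) (hbv : b ≠ v) :
      H.edist a b ≤ 2 :=
    edist_deleteEdges_le_two hau hav hbu hbv (edist_le_ediam.trans hG)
  have hnear {w x : V} (hwx : H.Adj w x) (hxu : x ≠ u) (hxv : x ≠ v) {b : V} (hbu : b ≠ u)
      (hbv : b ≠ v) : H.edist w b ≤ 3 :=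
    calc H.edist w b ≤ H.edist w x + H.edist x b := H.edist_triangle
      _ ≤ 1 + 2 := add_le_add (edist_le_one_iff_adj_or_eq.mpr (.inl hwx)) (hfar hxu hxv hbu hbv)
      _ = 3 := by norm_num
  have hvu : H.edist v u = 3 := by rw [edist_comm, huv]
  obtain ⟨x, hux, hxv⟩ := exists_adj_ne_of_one_lt_edist (by rw [huv]; decide) (by simp [huv])
  obtain ⟨y, hvy, hyu⟩ := exists_adj_ne_of_one_lt_edist (by rw [hvu]; decide) (by simp [hvu])
  have hbound {a b : V} (hbu : b ≠ u) (hbv : b ≠ v) : H.edist a b ≤ 3 := by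
    obtain rfl | hau := eq_or_ne a u
    · exact hnear hux hux.ne' hxv hbu hbv
    obtain rfl | hav := eq_or_ne a v
    · exact hnear hvy hyu hvy.ne' hbu hbv
    exact (hfar hau hav hbu hbv).trans (by decide)
  by_cases hb : b ≠ u ∧ b ≠ v
  · exact hbound hb.1 hb.2
  by_cases ha : a ≠ u ∧ a ≠ v
  · exact edist_comm (G := H) ▸ hbound ha.1 ha.2
  simp only [not_and_or, not_ne_iff] at ha hb
  rcases ha with rfl | rfl <;> rcases hb with rfl | rfl <;> simp [huv, hvu]

end SimpleGraph

theorem deleteEdge_of_cycleWeight_four_general {V : Type*} (G : SimpleGraph V)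
    (hdiam : G.diam = 2) (e : Sym2 V) (he : e ∈ G.edgeSet)
    (hw : cycleWeight G e = 4) :
    (G.deleteEdges {e}).Connected ∧
      (G.deleteEdges {e}).diam = 3 := by
  induction e using Sym2.ind with | _ u v => ?_
  have hG : G.ediam = 2 := by
    rw [← ENat.natCast_toNat (ediam_ne_top_of_diam_ne_zero (hdiam ▸ two_ne_zero))]
    exact congrArg _ hdiam
  have huv : (G.deleteEdges {s(u, v)}).edist u v = 3 := by
    rw [cycleWeight_eq_edist_deleteEdges_add_one he] at hw
    exact ENat.add_left_injective_of_ne_top ENat.one_ne_top hw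
  have hediam : (G.deleteEdges {s(u, v)}).ediam = 3 :=
    (ediam_le_of_edist_le (edist_deleteEdges_le_three hG.le huv)).antisymm
      (huv ▸ edist_le_ediam)
  have : Nonempty V := ⟨u⟩
  exact ⟨connected_of_ediam_ne_top (by simp [hediam]), by simp [diam, hediam]⟩

/-- Let `G` be a connected finite simple graph of diameter two and let
`e` be an edge of `G` with `w_G(e) = 4`. Then `G − e` is connected and has diameter exactly 3. -/
theorem deleteEdge_of_cycleWeight_four {V : Type*} [Fintype V] (G : SimpleGraph V)
    (hG : G.Connected) (hdiam : G.diam = 2) (e : Sym2 V) (he : e ∈ G.edgeSet)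
    (hw : cycleWeight G e = 4) :
    (G.deleteEdges {e}).Connected ∧
      (G.deleteEdges {e}).diam = 3 :=
  deleteEdge_of_cycleWeight_four_general G hdiam e he hw
end

section
/- Let G be a finite simple graph with at least four vertices, diameter two, and girth at most four, and suppose that for every edge e of G the graph G − e does not have diameter three. Then the girth of G is exactly three. -/
open SimpleGraph

private lemma walk_cases_le_two {V : Type*} {G : SimpleGraph V} {u v : V}
    (p : G.Walk u v) (h : p.length ≤ 2) :
    u = v ∨ G.Adj u v ∨ (∃ x, G.Adj u x ∧ G.Adj x v) := by
  match p with
  | .nil => exact Or.inl rfl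
  | .cons h1 .nil => exact Or.inr (Or.inl h1)
  | .cons h1 (.cons h2 .nil) => exact Or.inr (Or.inr ⟨_, h1, h2⟩)
  | .cons h1 (.cons h2 (.cons h3 q)) => simp [SimpleGraph.Walk.length_cons] at h

private lemma three_le_walk_length {V : Type*} {G : SimpleGraph V} {u v : V}
    (p : G.Walk u v) (hne : u ≠ v) (hadj : ¬ G.Adj u v)
    (h2 : ∀ x, G.Adj u x → G.Adj x v → False) : 3 ≤ p.length := by
  match p with
  | .nil => exact absurd rfl hne
  | .cons ha .nil => exact absurd ha hadj
  | .cons ha (.cons hb .nil) => exact (h2 _ ha hb).elim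
  | .cons ha (.cons hb (.cons hc q)) => simp [SimpleGraph.Walk.length_cons]

private lemma cycle4_elim {V : Type*} {G : SimpleGraph V} {a : V} (w : G.Walk a a)
    (hc : w.IsCycle) (hl : w.length = 4) :
    ∃ b c d : V, G.Adj a b ∧ G.Adj b c ∧ G.Adj c d ∧ G.Adj d a ∧
      a ≠ b ∧ a ≠ c ∧ a ≠ d ∧ b ≠ c ∧ b ≠ d ∧ c ≠ d := by
  cases w with
  | nil => simp at hl
  | cons h1 p =>
  cases p with
  | nil => simp at hl
  | cons h2 p =>
  cases p with
  | nil => simp at hl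
  | cons h3 p =>
  cases p with
  | nil => simp at hl
  | cons h4 p =>
  cases p with
  | cons h5 p => simp [Walk.length_cons] at hl
  | nil =>
  have hnd := hc.support_nodup
  simp [Walk.support_cons] at hnd
  refine ⟨_, _, _, h1, h2, h3, h4, ?_, ?_, ?_, ?_, ?_, ?_⟩ <;> aesop

/-- Let `G` be a finite simple graph with at least four vertices,
diameter two, and girth at most four, such that for every edge `e` of `G` the graph
`G − e` does not have diameter three (a disconnected graph having infinite diameter).
Then the girth of `G` is exactly three. -/
theorem egirth_eq_three {V : Type*} [Fintype V] (G : SimpleGraph V)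
    (hcard : 4 ≤ Fintype.card V) (hG : G.Connected) (hdiam : G.diam = 2)
    (hgirth : G.egirth ≤ 4)
    (hdel : ∀ e ∈ G.edgeSet, (G.deleteEdges {e}).ediam ≠ 3) :
    G.egirth = 3 := by
  by_contra hne3
  have h3 := G.three_le_egirth
  have h4 : G.egirth = 4 := by
    have hnt : G.egirth ≠ ⊤ := fun h => by rw [h] at hgirth; exact absurd hgirth (by decide)
    have hlt : (3 : ℕ∞) < G.egirth := lt_of_le_of_ne h3 (Ne.symm hne3)
    have h4le : (4 : ℕ∞) ≤ G.egirth := by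
      calc (4 : ℕ∞) = 3 + 1 := by decide
        _ ≤ G.egirth := Order.add_one_le_of_lt hlt
    exact le_antisymm hgirth h4le
  -- triangle-free
  have tri : ∀ x y z : V, G.Adj x y → G.Adj y z → G.Adj z x → False := by
    intro x y z hxy hyz hzx
    have hc : (SimpleGraph.Walk.cons hxy (.cons hyz (.cons hzx .nil))).IsCycle := by
      simp [Walk.isCycle_def, Walk.isTrail_def, hxy.ne, hyz.ne, hzx.ne, hxy.ne', hyz.ne',
        hzx.ne', Sym2.eq_iff]
    have hle := le_egirth.mp h4.ge x _ hc
    simp only [Walk.length_cons, Walk.length_nil] at hle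
    exact absurd hle (by decide)
  -- get a 4-cycle
  have hnac : ¬ G.IsAcyclic := by
    intro h
    rw [h.egirth_eq_top] at h4
    exact absurd h4.symm (by decide)
  obtain ⟨a, w, hcyc, hlen⟩ := exists_egirth_eq_length.mpr hnac
  rw [h4] at hlen
  have hlen4 : w.length = 4 := by exact_mod_cast hlen.symm
  obtain ⟨b, c, d, h1, h2, h3', h4', hab, hac, had, hbc, hbd, hcd⟩ := cycle4_elim w hcyc hlen4
  -- edist facts in G
  have hediamG : G.ediam = 2 := by
    have hnt : G.ediam ≠ ⊤ := G.ediam_ne_top_of_diam_ne_zero (by omega)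
    rw [← ENat.coe_toNat hnt]
    exact_mod_cast congrArg (Nat.cast : ℕ → ℕ∞) hdiam
  have hedist2 : ∀ u v : V, G.edist u v ≤ 2 := fun u v => hediamG ▸ G.edist_le_ediam
  have cases312 : ∀ u v : V, u = v ∨ G.Adj u v ∨ (∃ x, G.Adj u x ∧ G.Adj x v) := by
    intro u v
    obtain ⟨p, hp⟩ := hG.exists_walk_length_eq_edist u v
    refine walk_cases_le_two p ?_
    have := hedist2 u v
    rw [← hp] at this
    exact_mod_cast this
  set G' := G.deleteEdges {s(a, b)} with hG'
  have adj' : ∀ x y : V, G.Adj x y → s(x, y) ≠ s(a, b) → G'.Adj x y := by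
    intro x y hxy hne
    rw [hG', deleteEdges_adj]
    exact ⟨hxy, by simpa using hne⟩
  have had' : G'.Adj a d := adj' a d h4'.symm (by simp [Sym2.eq_iff]; tauto)
  have hdc' : G'.Adj d c := adj' d c h3'.symm (by simp [Sym2.eq_iff]; tauto)
  have hcb' : G'.Adj c b := adj' c b h2.symm (by simp [Sym2.eq_iff]; tauto)
  -- the K lemma
  have K : ∀ u v : V, u ≠ a → u ≠ b → v ≠ a → v ≠ b → G'.edist u v ≤ 2 := by
    intro u v hua hub hva hvb
    rcases cases312 u v with rfl | hadj | ⟨x, hux, hxv⟩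
    · simp [SimpleGraph.edist_self]
    · have h' : G'.Adj u v := adj' u v hadj (by simp [Sym2.eq_iff]; tauto)
      calc G'.edist u v = 1 := edist_eq_one_iff_adj.mpr h'
        _ ≤ 2 := by decide
    · have e1 : G'.Adj u x := adj' u x hux (by simp [Sym2.eq_iff]; tauto)
      have e2 : G'.Adj x v := adj' x v hxv (by simp [Sym2.eq_iff]; tauto)
      have := G'.edist_le (SimpleGraph.Walk.cons e1 (.cons e2 .nil))
      simpa using this
  -- edist a b = 3 in G'
  have hab3 : G'.edist a b = 3 := by
    apply le_antisymm
    · have := G'.edist_le (SimpleGraph.Walk.cons had' (.cons hdc' (.cons hcb' .nil)))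
      simpa using this
    · rw [edist_eq_sInf]
      apply le_sInf
      rintro x ⟨p, rfl⟩
      have h3p : 3 ≤ p.length := by
        apply three_le_walk_length p h1.ne
        · rw [hG', deleteEdges_adj]
          simp
        · intro x hax hxb
          rw [hG', deleteEdges_adj] at hax hxb
          exact tri a x b hax.1 hxb.1 h1.symm
      show (3 : ℕ∞) ≤ (p.length : ℕ∞)
      exact_mod_cast h3p
  have hda1 : G'.edist a d ≤ 1 := le_of_eq (edist_eq_one_iff_adj.mpr had')
  have hbc1 : G'.edist b c ≤ 1 := le_of_eq (edist_eq_one_iff_adj.mpr hcb'.symm)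
  have hcb1 : G'.edist c b ≤ 1 := le_of_eq (edist_eq_one_iff_adj.mpr hcb')
  have hda1' : G'.edist d a ≤ 1 := le_of_eq (edist_eq_one_iff_adj.mpr had'.symm)
  -- ediam G' ≤ 3
  have hle3 : G'.ediam ≤ 3 := by
    apply ediam_le_of_edist_le
    intro u v
    rcases cases312 u v with rfl | hadj | ⟨x, hux, hxv⟩
    · simp [SimpleGraph.edist_self]
    · by_cases hsym : s(u, v) = s(a, b)
      · rcases Sym2.eq_iff.mp hsym with ⟨rfl, rfl⟩ | ⟨rfl, rfl⟩
        · exact le_of_eq hab3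
        · rw [SimpleGraph.edist_comm]; exact le_of_eq hab3
      · have h' : G'.Adj u v := adj' u v hadj hsym
        calc G'.edist u v = 1 := edist_eq_one_iff_adj.mpr h'
          _ ≤ 3 := by decide
    · by_cases hb1 : s(u, x) = s(a, b)
      · rcases Sym2.eq_iff.mp hb1 with ⟨rfl, rfl⟩ | ⟨rfl, rfl⟩
        · -- a is now named u, b is now named x
          by_cases hva : v = u
          · subst hva; simp [SimpleGraph.edist_self]
          · have hvb : v ≠ x := hxv.ne'
            calc G'.edist u v ≤ G'.edist u d + G'.edist d v := SimpleGraph.edist_triangle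
              _ ≤ 1 + 2 := add_le_add hda1 (K d v (Ne.symm had) (Ne.symm hbd) hva hvb)
              _ = 3 := by decide
        · -- b is now named u, a is now named x
          by_cases hvb : v = u
          · subst hvb; simp [SimpleGraph.edist_self]
          · have hva : v ≠ x := hxv.ne'
            calc G'.edist u v ≤ G'.edist u c + G'.edist c v := SimpleGraph.edist_triangle
              _ ≤ 1 + 2 := add_le_add hbc1 (K c v (Ne.symm hac) (Ne.symm hbc) hva hvb)
              _ = 3 := by decide
      · by_cases hb2 : s(x, v) = s(a, b)
        · rcases Sym2.eq_iff.mp hb2 with ⟨rfl, rfl⟩ | ⟨rfl, rfl⟩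
          · -- a is now named x, b is now named v
            by_cases hub : u = v
            · subst hub; simp [SimpleGraph.edist_self]
            · have hua : u ≠ x := hux.ne
              calc G'.edist u v ≤ G'.edist u c + G'.edist c v := SimpleGraph.edist_triangle
                _ ≤ 2 + 1 := add_le_add (K u c hua hub (Ne.symm hac) (Ne.symm hbc)) hcb1
                _ = 3 := by decide
          · -- b is now named x, a is now named v
            by_cases hua : u = v
            · subst hua; simp [SimpleGraph.edist_self]
            · have hub : u ≠ x := hux.ne
              calc G'.edist u v ≤ G'.edist u d + G'.edist d v := SimpleGraph.edist_triangle
                _ ≤ 2 + 1 := add_le_add (K u d hua hub (Ne.symm had) (Ne.symm hbd)) hda1'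
                _ = 3 := by decide
        · have e1 : G'.Adj u x := adj' u x hux hb1
          have e2 : G'.Adj x v := adj' x v hxv hb2
          have h2' := G'.edist_le (SimpleGraph.Walk.cons e1 (.cons e2 .nil))
          calc G'.edist u v ≤ 2 := by simpa using h2'
            _ ≤ 3 := by decide
  have hediam' : G'.ediam = 3 := le_antisymm hle3 (hab3 ▸ G'.edist_le_ediam)
  exact hdel s(a, b) (G.mem_edgeSet.mpr h1) hediam'
end

section
/- Let G be a finite simple graph with at least four vertices, diameter two, and girth at most four, and suppose that for every edge e of G the graph G − e does not have diameter three. Then G is biconnected, that is, G is connected and has no cut-vertex. -/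
open SimpleGraph

private lemma cycle_edge_avoid {V : Type*} {G : SimpleGraph V} {a : V}
    (w : G.Walk a a) (hw : w.IsCycle) (v : V) :
    ∃ x y, G.Adj x y ∧ x ≠ v ∧ y ≠ v := by
  have h3 := hw.three_le_length
  have hnd := ((SimpleGraph.Walk.isCycle_def _).mp hw).2.2
  cases w with
  | nil => simp at h3
  | cons h₁ p =>
    rename_i b
    cases p with
    | nil => simp at h3
    | cons h₂ p₂ =>
      rename_i c
      cases p₂ with
      | nil => simp at h3
      | cons h₃ q =>
        rename_i d
        cases q with
        | nil =>
          -- cycle a b c a, h₁ : Adj a b, h₂ : Adj b c, h₃ : Adj c a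
          simp only [SimpleGraph.Walk.support_cons, SimpleGraph.Walk.support_nil,
            List.tail_cons, List.nodup_cons, List.mem_cons, List.mem_singleton,
            List.not_mem_nil, List.nodup_nil] at hnd
          have hbc : b ≠ c := by tauto
          have hba : b ≠ a := by tauto
          have hca : c ≠ a := by tauto
          by_cases hav : a = v
          · exact ⟨b, c, h₂, by rw [← hav]; exact hba, by rw [← hav]; exact hca⟩
          · by_cases hbv : b = v
            · exact ⟨c, a, h₃, by rw [← hbv]; exact hbc.symm, by rw [← hbv]; exact hba.symm⟩
            · by_cases hcv : c = v
              · exact ⟨a, b, h₁, hav, hbv⟩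
              · exact ⟨a, b, h₁, hav, hbv⟩
        | cons h₄ r =>
          rename_i e
          -- h₁ : Adj a b, h₂ : Adj b c, h₃ : Adj c d, h₄ : Adj d e, r : Walk e a
          simp only [SimpleGraph.Walk.support_cons, List.tail_cons, List.nodup_cons,
            List.mem_cons] at hnd
          have har : a ∈ r.support := r.end_mem_support
          have hba : b ≠ a := fun h => hnd.1 (Or.inr (Or.inr (h ▸ har)))
          have hbc : b ≠ c := fun h => hnd.1 (Or.inl h)
          have hbd : b ≠ d := fun h => hnd.1 (Or.inr (Or.inl h))
          have hca : c ≠ a := fun h => hnd.2.1 (Or.inr (h ▸ har))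
          have hcd : c ≠ d := fun h => hnd.2.1 (Or.inl h)
          by_cases hav : a = v
          · exact ⟨b, c, h₂, by rw [← hav]; exact hba, by rw [← hav]; exact hca⟩
          · by_cases hbv : b = v
            · exact ⟨c, d, h₃, by rw [← hbv]; exact hbc.symm, by rw [← hbv]; exact hbd.symm⟩
            · exact ⟨a, b, h₁, hav, hbv⟩

/-- Let `G` be a finite simple graph with at least four vertices,
diameter two, and girth at most four, such that for every edge `e` of `G` the graph
`G − e` does not have diameter three (a disconnected graph having infinite diameter).
Then `G` is biconnected, i.e., connected and without cut-vertices. -/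
theorem biconnected {V : Type*} [Fintype V] (G : SimpleGraph V)
    (hcard : 4 ≤ Fintype.card V) (hG : G.Connected) (hdiam : G.diam = 2)
    (hgirth : G.egirth ≤ 4)
    (hdel : ∀ e ∈ G.edgeSet, (G.deleteEdges {e}).ediam ≠ 3) :
    G.Connected ∧ ∀ v : V, (G.induce {w : V | w ≠ v}).Connected := by
  refine ⟨hG, fun v => ?_⟩
  by_contra hv
  have hediam : G.ediam = 2 := by
    have h := hdiam
    unfold SimpleGraph.diam at h
    rwa [ENat.toNat_eq_iff (by norm_num)] at h
  have hd2 : ∀ x y : V, G.edist x y ≤ 2 := fun x y => hediam ▸ G.edist_le_ediam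
  -- nonempty
  obtain ⟨w0, hw0⟩ := Fintype.exists_ne_of_one_lt_card (by omega) v
  have hw0' : w0 ∈ {w : V | w ≠ v} := hw0
  have hp : ¬(G.induce {w : V | w ≠ v}).Preconnected := fun h => by
    haveI : Nonempty {w : V | w ≠ v} := ⟨⟨w0, hw0'⟩⟩
    exact hv ⟨h⟩
  rw [SimpleGraph.Preconnected] at hp
  push_neg at hp
  obtain ⟨⟨a, ha⟩, ⟨b, hb⟩, hab⟩ := hp
  -- key lemma
  have key : ∀ x y (hx : x ∈ {w : V | w ≠ v}) (hy : y ∈ {w : V | w ≠ v}),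
      ¬(G.induce {w : V | w ≠ v}).Reachable ⟨x, hx⟩ ⟨y, hy⟩ →
      G.Adj v x ∧ G.Adj v y ∧ ¬G.Adj x y ∧ x ≠ y := by
    intro x y hx hy hr
    have hxy : x ≠ y := by
      rintro rfl
      exact hr (by rfl)
    have hnadj : ¬G.Adj x y := by
      intro h
      exact hr (SimpleGraph.Adj.reachable (by simp [SimpleGraph.comap_adj, h]))
    obtain ⟨p, hp⟩ := (hG x y).exists_walk_length_eq_edist
    have hlen : p.length ≤ 2 := by
      have h2 := hd2 x y
      rw [← hp] at h2
      exact_mod_cast h2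
    cases p with
    | nil => exact absurd rfl hxy
    | cons h q =>
      rename_i m
      cases q with
      | nil => exact absurd h hnadj
      | cons h' q' =>
        rename_i m'
        cases q' with
        | nil =>
          -- h : Adj x m, h' : Adj m y
          by_cases hm : m = v
          · subst hm
            exact ⟨h.symm, h', hnadj, hxy⟩
          · exfalso
            refine hr (SimpleGraph.Reachable.trans
              (SimpleGraph.Adj.reachable (v := (⟨m, hm⟩ : {w : V | w ≠ v})) ?_)
              (SimpleGraph.Adj.reachable ?_))
            · simp [SimpleGraph.comap_adj, h]
            · simp [SimpleGraph.comap_adj, h']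
        | cons => simp only [SimpleGraph.Walk.length_cons] at hlen; omega
  have univ : ∀ x, x ≠ v → G.Adj v x := by
    intro x hx
    by_cases hra : (G.induce {w : V | w ≠ v}).Reachable ⟨x, hx⟩ ⟨a, ha⟩
    · have hnb : ¬(G.induce {w : V | w ≠ v}).Reachable ⟨x, hx⟩ ⟨b, hb⟩ :=
        fun h => hab (hra.symm.trans h)
      exact (key x b hx hb hnb).1
    · exact (key x a hx ha hra).1
  -- get an edge avoiding v
  have hac : ¬G.IsAcyclic := by
    intro h
    rw [← SimpleGraph.egirth_eq_top] at h
    rw [h] at hgirth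
    exact absurd hgirth (by norm_num)
  obtain ⟨c0, w, hwc, -⟩ := SimpleGraph.exists_egirth_eq_length.mpr hac
  obtain ⟨x, y, hxy, hxv, hyv⟩ := cycle_edge_avoid w hwc v
  -- pick c not reachable from x (nor from y)
  have hxyH : (G.induce {w : V | w ≠ v}).Reachable ⟨y, hyv⟩ ⟨x, hxv⟩ :=
    SimpleGraph.Adj.reachable (by simp [SimpleGraph.comap_adj, hxy.symm])
  obtain ⟨c, hcv, hrcx⟩ : ∃ (c : V) (hcv : c ∈ {w : V | w ≠ v}),
      ¬(G.induce {w : V | w ≠ v}).Reachable ⟨x, hxv⟩ ⟨c, hcv⟩ := by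
    by_cases hra : (G.induce {w : V | w ≠ v}).Reachable ⟨x, hxv⟩ ⟨a, ha⟩
    · exact ⟨b, hb, fun h => hab (hra.symm.trans h)⟩
    · exact ⟨a, ha, hra⟩
  have hrcy : ¬(G.induce {w : V | w ≠ v}).Reachable ⟨y, hyv⟩ ⟨c, hcv⟩ :=
    fun h => hrcx (hxyH.symm.trans h)
  obtain ⟨hvx, hvc, hnxc, hxc⟩ := key x c hxv hcv hrcx
  obtain ⟨hvy, -, hnyc, hyc⟩ := key y c hyv hcv hrcy
  -- the edge to delete
  have hmem : s(v, x) ∈ G.edgeSet := hvx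
  refine hdel _ hmem ?_
  set G' := G.deleteEdges {s(v, x)} with hG'
  have hvy' : G'.Adj v y := by
    rw [hG', SimpleGraph.deleteEdges_adj]
    refine ⟨hvy, ?_⟩
    simp only [Set.mem_singleton_iff, Sym2.congr_right]
    exact hxy.ne'
  have hyx' : G'.Adj y x := by
    rw [hG', SimpleGraph.deleteEdges_adj]
    refine ⟨hxy.symm, ?_⟩
    simp only [Set.mem_singleton_iff]
    intro h
    rw [Sym2.eq_iff] at h
    rcases h with ⟨h1, -⟩ | ⟨-, h2⟩
    · exact hyv h1
    · exact hxv h2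
  have hvz' : ∀ z, z ≠ v → z ≠ x → G'.Adj v z := by
    intro z hzv hzx
    rw [hG', SimpleGraph.deleteEdges_adj]
    refine ⟨univ z hzv, ?_⟩
    simp only [Set.mem_singleton_iff, Sym2.congr_right]
    exact hzx
  have hvz1 : ∀ z, z ≠ x → G'.edist v z ≤ 1 := by
    intro z hzx
    by_cases hzv : z = v
    · subst hzv; simp
    · have h1 := SimpleGraph.edist_le (hvz' z hzv hzx).toWalk
      simpa using h1
  have hvx2 : G'.edist v x ≤ 2 := by
    calc G'.edist v x ≤ (SimpleGraph.Walk.cons hvy' hyx'.toWalk).length :=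
          SimpleGraph.edist_le _
      _ = 2 := by simp
  have hvz2 : ∀ z, G'.edist v z ≤ 2 := by
    intro z
    by_cases hzx : z = x
    · subst hzx; exact hvx2
    · exact le_trans (hvz1 z hzx) (by norm_num)
  have upper : G'.ediam ≤ 3 := by
    apply SimpleGraph.ediam_le_of_edist_le
    intro p q
    by_cases hpx : p = x
    · by_cases hqx : q = x
      · subst hpx; subst hqx; simp
      · calc G'.edist p q ≤ G'.edist p v + G'.edist v q := SimpleGraph.edist_triangle
          _ = G'.edist v p + G'.edist v q := by rw [SimpleGraph.edist_comm]
          _ ≤ 2 + 1 := add_le_add (hvz2 p) (hvz1 q hqx)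
          _ = 3 := by norm_num
    · calc G'.edist p q ≤ G'.edist p v + G'.edist v q := SimpleGraph.edist_triangle
        _ = G'.edist v p + G'.edist v q := by rw [SimpleGraph.edist_comm]
        _ ≤ 1 + 2 := add_le_add (hvz1 p hpx) (hvz2 q)
        _ = 3 := by norm_num
  -- lower bound: edist x c ≥ 3
  have lower : 3 ≤ G'.edist x c := by
    by_contra hlt
    push_neg at hlt
    have hne : G'.edist x c ≠ ⊤ := fun h => by rw [h] at hlt; exact absurd hlt (by simp)
    obtain ⟨p, hp⟩ := SimpleGraph.exists_walk_of_edist_ne_top hne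
    have hlen : p.length < 3 := by
      rw [← hp] at hlt
      exact_mod_cast hlt
    cases p with
    | nil => exact hxc rfl
    | cons h q =>
      rename_i m
      cases q with
      | nil =>
        rw [SimpleGraph.deleteEdges_adj] at h
        exact hnxc h.1
      | cons h' q' =>
        rename_i m'
        cases q' with
        | nil =>
          rw [SimpleGraph.deleteEdges_adj] at h h'
          by_cases hm : m = v
          · subst hm
            exact h.2 (by rw [Sym2.eq_swap]; rfl)
          · refine hrcx (SimpleGraph.Reachable.trans
              (SimpleGraph.Adj.reachable (v := (⟨m, hm⟩ : {w : V | w ≠ v})) ?_)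
              (SimpleGraph.Adj.reachable ?_))
            · simp [SimpleGraph.comap_adj]; exact h.1
            · simp [SimpleGraph.comap_adj]; exact h'.1
        | cons => simp only [SimpleGraph.Walk.length_cons] at hlen; omega
  exact le_antisymm upper (le_trans lower SimpleGraph.edist_le_ediam)
end

section
/- Let G be a finite simple graph with at least four vertices, diameter two, and girth at most four, and suppose that for every edge e of G the graph G − e does not have diameter three. Then every edge of G lies on a triangle, i.e., w_G(e) = 3 for every edge e of G. -/
/-!
For an edge `xy` whose ends both have further neighbours, every vertex of `H = G - xy` is within
distance three of `x` and of `y`, and two vertices other than `x, y` are still within distance two.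
So `d_H(x, y) ≤ 3` gives `ediam H ≤ 3`, and the hypothesis on `G - e` upgrades this to
`ediam H ≤ 2`: such an edge on a cycle of length at most four lies on a triangle. In particular
the short cycle given by the girth yields a triangle, and no vertex `u` is pendant (if `v` is its
only neighbour, then `v` is adjacent to both ends of a triangle edge `pq`, and in `G - vp` the
vertex `u` is at distance at least three from `p`).

Now an edge `uv` on no triangle lies on no cycle of length at most four, and this property passes
from an edge `xy` to every edge `yz` with `z ≠ x`: otherwise `d(z, x) ≤ 2` in `G - yz` closes a
triangle or a square through `xy`. By diameter two every vertex, in particular a vertex of a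
triangle, is an end of such an edge, whose other neighbours are then pairwise non-adjacent.
-/

namespace SimpleGraph

variable {V : Type*} {G : SimpleGraph V} {p q u v w x y z : V}

lemma deleteEdges_adj_of_ne_left (h : G.Adj p q) (hpx : p ≠ x) (hpy : p ≠ y) :
    (G.deleteEdges {s(x, y)}).Adj p q := by
  simp [h, hpx, hpy]

lemma deleteEdges_adj_of_ne_right (h : G.Adj p q) (hqx : q ≠ x) (hqy : q ≠ y) :
    (G.deleteEdges {s(x, y)}).Adj p q := by
  simp [h, hqx, hqy]

lemma edist_deleteEdges_swap :
    (G.deleteEdges {s(y, x)}).edist y x = (G.deleteEdges {s(x, y)}).edist x y := by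
  rw [Sym2.eq_swap, edist_comm]

lemma edist_le_two_of_adj_of_adj (hpz : G.Adj p z) (hzq : G.Adj z q) : G.edist p q ≤ 2 := by
  simpa using (Walk.cons hpz (Walk.cons hzq .nil)).edist_le

lemma edist_le_three_of_adj_of_adj_of_adj (hpz : G.Adj p z) (hzw : G.Adj z w)
    (hwq : G.Adj w q) : G.edist p q ≤ 3 := by
  simpa using (Walk.cons hpz (Walk.cons hzw (Walk.cons hwq .nil))).edist_le

lemma exists_adj_adj_of_edist_le_two (h : G.edist p q ≤ 2) :
    p = q ∨ G.Adj p q ∨ ∃ z, G.Adj p z ∧ G.Adj z q := by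
  by_contra! hc
  refine h.not_gt (two_lt_edist_iff.mpr ⟨hc.1, hc.2.1, ?_⟩)
  ext z
  simp only [mem_commonNeighbors, Set.mem_empty_iff_false, iff_false, not_and]
  exact fun hpz hqz => hc.2.2 z hpz hqz.symm

lemma edist_deleteEdges_le_two_s9 (h2 : G.ediam ≤ 2) (hpx : p ≠ x) (hpy : p ≠ y) (hqx : q ≠ x)
    (hqy : q ≠ y) : (G.deleteEdges {s(x, y)}).edist p q ≤ 2 := by
  rcases exists_adj_adj_of_edist_le_two (edist_le_ediam.trans h2 : G.edist p q ≤ 2) with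
    rfl | hpq | ⟨z, hpz, hzq⟩
  · simp
  · exact (edist_eq_one_iff_adj.mpr (deleteEdges_adj_of_ne_left hpq hpx hpy)).le.trans
      one_le_two
  · exact edist_le_two_of_adj_of_adj (deleteEdges_adj_of_ne_left hpz hpx hpy)
      (deleteEdges_adj_of_ne_right hzq hqx hqy)

lemma edist_deleteEdges_left_le_three (h2 : G.ediam ≤ 2) (hxw : G.Adj x w) (hwy : w ≠ y)
    (hxy : (G.deleteEdges {s(x, y)}).edist x y ≤ 3) (q : V) :
    (G.deleteEdges {s(x, y)}).edist x q ≤ 3 := by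
  obtain rfl | hqx := eq_or_ne q x
  · simp
  obtain rfl | hqy := eq_or_ne q y
  · exact hxy
  calc (G.deleteEdges {s(x, y)}).edist x q
      ≤ (G.deleteEdges {s(x, y)}).edist x w + (G.deleteEdges {s(x, y)}).edist w q :=
        SimpleGraph.edist_triangle
    _ ≤ 1 + 2 := add_le_add
        (edist_eq_one_iff_adj.mpr (deleteEdges_adj_of_ne_right hxw hxw.ne' hwy)).le
        (edist_deleteEdges_le_two_s9 h2 hxw.ne' hwy hqx hqy)
    _ = 3 := by norm_num

lemma ediam_deleteEdges_le_three (h2 : G.ediam ≤ 2) (hxw : G.Adj x w) (hwy : w ≠ y)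
    (hyz : G.Adj y z) (hzx : z ≠ x) (hxy : (G.deleteEdges {s(x, y)}).edist x y ≤ 3) :
    (G.deleteEdges {s(x, y)}).ediam ≤ 3 := by
  have hx := edist_deleteEdges_left_le_three h2 hxw hwy hxy
  have hy : ∀ q, (G.deleteEdges {s(x, y)}).edist y q ≤ 3 := by
    rw [← edist_deleteEdges_swap] at hxy
    simpa only [Sym2.eq_swap] using edist_deleteEdges_left_le_three h2 hyz hzx hxy
  refine ediam_le_of_edist_le fun p q => ?_
  obtain rfl | hpx := eq_or_ne p x
  · exact hx q
  obtain rfl | hpy := eq_or_ne p y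
  · exact hy q
  obtain rfl | hqx := eq_or_ne q x
  · rw [edist_comm]; exact hx p
  obtain rfl | hqy := eq_or_ne q y
  · rw [edist_comm]; exact hy p
  exact (edist_deleteEdges_le_two_s9 h2 hpx hpy hqx hqy).trans (by norm_num)

lemma ediam_deleteEdges_le_two (h2 : G.ediam ≤ 2)
    (hdel : ∀ e ∈ G.edgeSet, (G.deleteEdges {e}).ediam ≠ 3) (hxy : G.Adj x y)
    (hxw : G.Adj x w) (hwy : w ≠ y) (hyz : G.Adj y z) (hzx : z ≠ x)
    (hxy3 : (G.deleteEdges {s(x, y)}).edist x y ≤ 3) :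
    (G.deleteEdges {s(x, y)}).ediam ≤ 2 :=
  Order.le_of_lt_add_one <| (ediam_deleteEdges_le_three h2 hxw hwy hyz hzx hxy3).lt_of_ne
    (hdel _ hxy)

lemma exists_triangle_or_square_of_egirth_le_four (h : G.egirth ≤ 4) :
    (∃ a b c, G.Adj a b ∧ G.Adj b c ∧ G.Adj c a) ∨
      ∃ a b c d, G.Adj a b ∧ G.Adj b c ∧ G.Adj c d ∧ G.Adj d a ∧ a ≠ c ∧ b ≠ d := by
  have hcyc : ¬ G.IsAcyclic := fun hac => by simp [hac.egirth_eq_top] at h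
  obtain ⟨a, w, hw, hlen⟩ := exists_egirth_eq_length.mpr hcyc
  have hle : w.length ≤ 4 := by exact_mod_cast hlen ▸ h
  -- the `match` below needs this to discard walks of length one and two
  have h3 := hw.three_le_length
  match w, hw with
  | .cons hab (.cons hbc (.cons hca .nil)), _ => exact .inl ⟨_, _, _, hab, hbc, hca⟩
  | .cons hab (.cons hbc (.cons hcd (.cons hda .nil))), hw =>
    have hnd := hw.support_nodup
    simp only [Walk.support_cons, Walk.support_nil, List.tail_cons, List.nodup_cons,
      List.mem_cons, List.not_mem_nil] at hnd
    exact .inr ⟨_, _, _, _, hab, hbc, hcd, hda, Ne.symm (by tauto), by tauto⟩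
  | .cons _ (.cons _ (.cons _ (.cons _ (.cons _ _)))), _ =>
    simp only [Walk.length_cons] at hle; omega

lemma exists_adj_adj_of_edist_deleteEdges_le_three (h2 : G.ediam ≤ 2)
    (hdel : ∀ e ∈ G.edgeSet, (G.deleteEdges {e}).ediam ≠ 3) (hxy : G.Adj x y)
    (hxw : G.Adj x w) (hwy : w ≠ y) (hyz : G.Adj y z) (hzx : z ≠ x)
    (hxy3 : (G.deleteEdges {s(x, y)}).edist x y ≤ 3) : ∃ c, G.Adj x c ∧ G.Adj c y := by
  have : (G.deleteEdges {s(x, y)}).edist x y ≤ 2 :=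
    edist_le_ediam.trans (ediam_deleteEdges_le_two h2 hdel hxy hxw hwy hyz hzx hxy3)
  rcases exists_adj_adj_of_edist_le_two this with h | h | ⟨c, hxc, hcy⟩
  · exact absurd h hxy.ne
  · simp at h
  · exact ⟨c, (deleteEdges_adj.mp hxc).1, (deleteEdges_adj.mp hcy).1⟩

lemma exists_triangle (h2 : G.ediam ≤ 2)
    (hdel : ∀ e ∈ G.edgeSet, (G.deleteEdges {e}).ediam ≠ 3) (hgirth : G.egirth ≤ 4) :
    ∃ a b c, G.Adj a b ∧ G.Adj b c ∧ G.Adj c a := by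
  rcases exists_triangle_or_square_of_egirth_le_four hgirth with htri |
    ⟨a, b, c, d, hab, hbc, hcd, hda, hac, hbd⟩
  · exact htri
  have hab3 : (G.deleteEdges {s(a, b)}).edist a b ≤ 3 :=
    edist_le_three_of_adj_of_adj_of_adj (deleteEdges_adj_of_ne_right hda.symm hda.ne hbd.symm)
      (deleteEdges_adj_of_ne_left hcd.symm hda.ne hbd.symm)
      (deleteEdges_adj_of_ne_left hbc.symm hac.symm hbc.ne')
  obtain ⟨e, hae, heb⟩ := exists_adj_adj_of_edist_deleteEdges_le_three h2 hdel hab hda.symm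
    hbd.symm hbc hac.symm hab3
  exact ⟨a, e, b, hae, heb, hab.symm⟩

lemma adj_of_forall_adj_eq (h2 : G.ediam ≤ 2) (hu : ∀ w, G.Adj u w → w = v) (hpu : p ≠ u)
    (hpv : p ≠ v) : G.Adj v p := by
  rcases exists_adj_adj_of_edist_le_two (edist_le_ediam.trans h2 : G.edist u p ≤ 2) with
    h | h | ⟨z, huz, hzp⟩
  · exact absurd h.symm hpu
  · exact absurd (hu p h) hpv
  · exact hu z huz ▸ hzp

lemma exists_adj_ne_of_adj (h2 : G.ediam ≤ 2)
    (hdel : ∀ e ∈ G.edgeSet, (G.deleteEdges {e}).ediam ≠ 3)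
    (htri : ∃ a b c, G.Adj a b ∧ G.Adj b c ∧ G.Adj c a) (huv : G.Adj u v) :
    ∃ w, G.Adj u w ∧ w ≠ v := by
  by_contra! hu
  obtain ⟨a, b, c, hab, hbc, hca⟩ := htri
  have hne : ∀ {a b c}, G.Adj a b → G.Adj b c → G.Adj c a → a ≠ u := by
    rintro a b c hab hbc hca rfl
    exact hbc.ne ((hu b hab).trans (hu c hca.symm).symm)
  obtain ⟨p, q, hpq, hpu, hpv, hqu, hqv⟩ :
      ∃ p q, G.Adj p q ∧ p ≠ u ∧ p ≠ v ∧ q ≠ u ∧ q ≠ v := by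
    by_cases hav : a = v
    · exact ⟨b, c, hbc, hne hbc hca hab, hav ▸ hab.ne', hne hca hab hbc, hav ▸ hca.ne⟩
    by_cases hbv : b = v
    · exact ⟨c, a, hca, hne hca hab hbc, hbv ▸ hbc.ne', hne hab hbc hca, hav⟩
    · exact ⟨a, b, hab, hne hab hbc hca, hav, hne hbc hca hab, hbv⟩
  have hvp := adj_of_forall_adj_eq h2 hu hpu hpv
  have hvq := adj_of_forall_adj_eq h2 hu hqu hqv
  have hvp2 : (G.deleteEdges {s(v, p)}).edist v p ≤ 3 :=
    (edist_le_two_of_adj_of_adj (deleteEdges_adj_of_ne_right hvq hqv hpq.ne')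
      (deleteEdges_adj_of_ne_left hpq.symm hqv hpq.ne')).trans (by norm_num)
  have hup : (G.deleteEdges {s(v, p)}).edist u p ≤ 2 :=
    edist_le_ediam.trans (ediam_deleteEdges_le_two h2 hdel hvp huv.symm (Ne.symm hpu) hpq
      hqv hvp2)
  rcases exists_adj_adj_of_edist_le_two hup with h | h | ⟨z, huz, hzp⟩
  · exact hpu h.symm
  · exact hpv (hu p (deleteEdges_adj.mp h).1)
  · obtain rfl := hu z (deleteEdges_adj.mp huz).1
    simp at hzp

/-- Every cycle through the edge `xy` has length at least five, i.e. `w_G(xy) ≥ 5`. -/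
def IsLongEdge (G : SimpleGraph V) (x y : V) : Prop :=
  3 < (G.deleteEdges {s(x, y)}).edist x y

lemma IsLongEdge.symm (h : G.IsLongEdge x y) : G.IsLongEdge y x := by
  rwa [IsLongEdge, edist_deleteEdges_swap]

lemma IsLongEdge.not_adj (h : G.IsLongEdge x y) (hxz : G.Adj x z) : ¬ G.Adj z y := fun hzy =>
  not_le_of_gt h <| (edist_le_two_of_adj_of_adj (deleteEdges_adj_of_ne_right hxz hxz.ne' hzy.ne)
    (deleteEdges_adj_of_ne_left hzy hxz.ne' hzy.ne)).trans (by norm_num)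

lemma IsLongEdge.not_adj_of_adj_of_adj (h : G.IsLongEdge x y) (hxz : G.Adj x z)
    (hwy : G.Adj w y) (hzy : z ≠ y) (hwx : w ≠ x) : ¬ G.Adj z w := fun hzw =>
  not_le_of_gt h <| edist_le_three_of_adj_of_adj_of_adj
    (deleteEdges_adj_of_ne_right hxz hxz.ne' hzy) (deleteEdges_adj_of_ne_left hzw hxz.ne' hzy)
    (deleteEdges_adj_of_ne_left hwy hwx hwy.ne)

lemma IsLongEdge.of_adj (h2 : G.ediam ≤ 2)
    (hdel : ∀ e ∈ G.edgeSet, (G.deleteEdges {e}).ediam ≠ 3)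
    (hmin : ∀ a b, G.Adj a b → ∃ c, G.Adj a c ∧ c ≠ b) (hxy : G.Adj x y)
    (h : G.IsLongEdge x y) (hyz : G.Adj y z) (hzx : z ≠ x) : G.IsLongEdge y z := by
  by_contra! hyz3
  obtain ⟨w, hzw, hwy⟩ := hmin z y hyz.symm
  have hzx2 : (G.deleteEdges {s(y, z)}).edist z x ≤ 2 :=
    edist_le_ediam.trans (ediam_deleteEdges_le_two h2 hdel hyz hxy.symm (Ne.symm hzx) hzw hwy
      (not_lt.mp hyz3))
  rcases exists_adj_adj_of_edist_le_two hzx2 with hzx' | hzx' | ⟨c, hzc, hcx⟩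
  · exact hzx hzx'
  · exact h.not_adj (deleteEdges_adj.mp hzx').1.symm hyz.symm
  · have hcy : c ≠ y := by
      rintro rfl
      simp [Sym2.eq_swap] at hzc
    exact h.not_adj_of_adj_of_adj (deleteEdges_adj.mp hcx).1.symm hyz.symm hcy hzx
      (deleteEdges_adj.mp hzc).1.symm

lemma isLongEdge_of_forall_not_adj (h2 : G.ediam ≤ 2)
    (hdel : ∀ e ∈ G.edgeSet, (G.deleteEdges {e}).ediam ≠ 3)
    (hmin : ∀ a b, G.Adj a b → ∃ c, G.Adj a c ∧ c ≠ b) (huv : G.Adj u v)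
    (hno : ∀ z, G.Adj u z → ¬ G.Adj z v) : G.IsLongEdge u v := by
  by_contra! huv3
  obtain ⟨w, huw, hwv⟩ := hmin u v huv
  obtain ⟨z, hvz, hzu⟩ := hmin v u huv.symm
  obtain ⟨c, huc, hcv⟩ :=
    exists_adj_adj_of_edist_deleteEdges_le_three h2 hdel huv huw hwv hvz hzu (not_lt.mp huv3)
  exact hno c huc hcv

lemma exists_isLongEdge (h2 : G.ediam ≤ 2)
    (hdel : ∀ e ∈ G.edgeSet, (G.deleteEdges {e}).ediam ≠ 3)
    (hmin : ∀ a b, G.Adj a b → ∃ c, G.Adj a c ∧ c ≠ b) (huv : G.Adj u v)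
    (h : G.IsLongEdge u v) (p : V) : ∃ x, G.Adj x p ∧ G.IsLongEdge x p := by
  have hu : ∀ a, G.Adj u a → G.IsLongEdge u a := by
    intro a hua
    obtain rfl | hav := eq_or_ne a v
    · exact h
    · exact h.symm.of_adj h2 hdel hmin huv.symm hua hav
  obtain rfl | hpu := eq_or_ne p u
  · exact ⟨v, huv.symm, h.symm⟩
  rcases exists_adj_adj_of_edist_le_two (edist_le_ediam.trans h2 : G.edist u p ≤ 2) with
    hup | hup | ⟨a, hua, hap⟩
  · exact absurd hup.symm hpu
  · exact ⟨u, hup, hu p hup⟩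
  · exact ⟨a, hap, (hu a hua).of_adj h2 hdel hmin hua hap hpu⟩

lemma IsLongEdge.isIndepSet_neighborSet (h2 : G.ediam ≤ 2)
    (hdel : ∀ e ∈ G.edgeSet, (G.deleteEdges {e}).ediam ≠ 3)
    (hmin : ∀ a b, G.Adj a b → ∃ c, G.Adj a c ∧ c ≠ b) (hxy : G.Adj x y)
    (h : G.IsLongEdge x y) : G.IsIndepSet (G.neighborSet y) := by
  intro p (hyp : G.Adj y p) q (hyq : G.Adj y q) _ hpq
  obtain rfl | hpx := eq_or_ne p x
  · exact h.not_adj hpq hyq.symm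
  · exact (h.of_adj h2 hdel hmin hxy hyp hpx).not_adj hyq hpq.symm

end SimpleGraph

open SimpleGraph

lemma cycleWeight_eq_three_of_adj {V : Type*} {G : SimpleGraph V} {x y z : V} (hxy : G.Adj x y)
    (hyz : G.Adj y z) (hzx : G.Adj z x) :
    cycleWeight G s(x, y) = 3 := by
  let t : G.Walk x x := .cons hxy (.cons hyz (.cons hzx .nil))
  have ht : t.IsCycle := by
    have := hxy.ne; have := hyz.ne; have := hzx.ne
    refine ⟨⟨⟨?_⟩, by simp [t]⟩, ?_⟩ <;> simp [t] <;> tauto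
  refine le_antisymm ?_ (le_iInf₂ fun _ w => le_iInf fun hw => ?_)
  · exact iInf₂_le_of_le x t (iInf_le_of_le ⟨ht, by simp [t]⟩ (by simp [t]))
  · exact_mod_cast hw.1.three_le_length

theorem cycleWeight_eq_three_general {V : Type*} (G : SimpleGraph V)
    (hdiam : G.diam = 2)
    (hgirth : G.egirth ≤ 4)
    (hdel : ∀ e ∈ G.edgeSet, (G.deleteEdges {e}).ediam ≠ 3) :
    ∀ e ∈ G.edgeSet, cycleWeight G e = 3 := by
  have h2 : G.ediam ≤ 2 := by
    rw [← ENat.natCast_toNat (ediam_ne_top_of_diam_ne_zero (by simp [hdiam]))]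
    exact_mod_cast hdiam.le
  obtain ⟨a, b, c, hab, hbc, hca⟩ := exists_triangle h2 hdel hgirth
  have hmin : ∀ a b, G.Adj a b → ∃ c, G.Adj a c ∧ c ≠ b :=
    fun _ _ => exists_adj_ne_of_adj h2 hdel ⟨a, b, c, hab, hbc, hca⟩
  refine Sym2.ind fun u v huv => ?_
  obtain ⟨z, huz, hzv⟩ : ∃ z, G.Adj u z ∧ G.Adj z v := by
    by_contra! hno
    obtain ⟨x, hxa, hx⟩ := exists_isLongEdge h2 hdel hmin huv
      (isLongEdge_of_forall_not_adj h2 hdel hmin huv hno) a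
    exact hx.isIndepSet_neighborSet h2 hdel hmin hxa hab hca.symm hbc.ne hbc
  exact cycleWeight_eq_three_of_adj huv hzv.symm huz.symm

/-- Let `G` be a finite simple graph with at least four vertices,
diameter two, and girth at most four, such that for every edge `e` of `G` the graph
`G − e` does not have diameter three (a disconnected graph having infinite diameter).
Then every edge of `G` lies on a triangle, i.e., `w_G(e) = 3` for every edge `e`. -/
theorem cycleWeight_eq_three {V : Type*} [Fintype V] (G : SimpleGraph V)
    (hcard : 4 ≤ Fintype.card V) (hG : G.Connected) (hdiam : G.diam = 2)
    (hgirth : G.egirth ≤ 4)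
    (hdel : ∀ e ∈ G.edgeSet, (G.deleteEdges {e}).ediam ≠ 3) :
    ∀ e ∈ G.edgeSet, cycleWeight G e = 3 :=
  cycleWeight_eq_three_general G hdiam hgirth hdel
end

section
/- Let G be a finite simple graph with at least four vertices, diameter two, and girth at most four, and suppose that for every edge e of G the graph G − e does not have diameter three. Then for every edge e of G, the graph G − e is connected and has diameter exactly two. -/
open SimpleGraph

namespace DelDiam

variable {V : Type*}

def P2 (H : SimpleGraph V) (x y : V) : Prop :=
  x = y ∨ H.Adj x y ∨ ∃ m, H.Adj x m ∧ H.Adj m y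

lemma edist_le_one' {H : SimpleGraph V} {x y : V} (h : H.Adj x y) : H.edist x y ≤ 1 := by
  simpa using SimpleGraph.edist_le h.toWalk

lemma edist_le_two' {H : SimpleGraph V} {x m y : V} (h1 : H.Adj x m) (h2 : H.Adj m y) :
    H.edist x y ≤ 2 := by
  have := SimpleGraph.edist_le (SimpleGraph.Walk.cons h1 h2.toWalk)
  simpa using this

lemma edist_le_three' {H : SimpleGraph V} {x m n y : V} (h1 : H.Adj x m) (h2 : H.Adj m n)
    (h3 : H.Adj n y) : H.edist x y ≤ 3 := by
  have := SimpleGraph.edist_le (SimpleGraph.Walk.cons h1 (SimpleGraph.Walk.cons h2 h3.toWalk))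
  simpa using this

lemma P2_of_walk {H : SimpleGraph V} {x y : V} (p : H.Walk x y) (h : p.length ≤ 2) : P2 H x y := by
  cases p with
  | nil => exact Or.inl rfl
  | cons h1 q =>
    cases q with
    | nil => exact Or.inr (Or.inl h1)
    | cons h2 r =>
      cases r with
      | nil => exact Or.inr (Or.inr ⟨_, h1, h2⟩)
      | cons h3 s => simp [SimpleGraph.Walk.length_cons] at h

lemma P2_of_edist_le_two {H : SimpleGraph V} {x y : V} (h : H.edist x y ≤ 2) : P2 H x y := by
  have hne : H.edist x y ≠ ⊤ := by
    intro ht; rw [ht] at h; exact (by simp : ¬ ((⊤:ℕ∞) ≤ 2)) h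
  obtain ⟨p, hp⟩ := SimpleGraph.exists_walk_of_edist_ne_top hne
  refine P2_of_walk p ?_
  have : (p.length : ℕ∞) ≤ 2 := by rw [hp]; exact h
  exact_mod_cast this

lemma lt_edist_of_not_P2 {H : SimpleGraph V} {x y : V} (h : ¬ P2 H x y) : 2 < H.edist x y := by
  by_contra hc
  exact h (P2_of_edist_le_two (not_lt.mp hc))

lemma sym2_ne {x y u v : V} (h : ¬((x = u ∧ y = v) ∨ (x = v ∧ y = u))) :
    s(x,y) ≠ s(u,v) := by
  rw [Ne, Sym2.eq_iff]; exact h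

lemma delAdj {G : SimpleGraph V} {e : Sym2 V} {x y : V} (h : G.Adj x y) (hne : s(x,y) ≠ e) :
    (G.deleteEdges {e}).Adj x y :=
  SimpleGraph.deleteEdges_adj.mpr ⟨h, by simpa using hne⟩

lemma adj_of_delAdj {G : SimpleGraph V} {e : Sym2 V} {x y : V}
    (h : (G.deleteEdges {e}).Adj x y) : G.Adj x y :=
  (SimpleGraph.deleteEdges_adj.mp h).1

lemma del_swap (G : SimpleGraph V) (x y : V) :
    G.deleteEdges {s(x,y)} = G.deleteEdges {s(y,x)} := by
  rw [Sym2.eq_swap]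

/-- contradiction helpers -/
lemma c1 {H : SimpleGraph V} {x y : V} (h : 2 < H.edist x y) (ha : H.Adj x y) : False :=
  (not_le.mpr h) (le_trans (edist_le_one' ha) (by norm_num))

lemma c2 {H : SimpleGraph V} {x y m : V} (h : 2 < H.edist x y)
    (h1 : H.Adj x m) (h2 : H.Adj m y) : False :=
  (not_le.mpr h) (edist_le_two' h1 h2)

lemma c3 {H : SimpleGraph V} {x y m n : V} (h : 3 < H.edist x y)
    (h1 : H.Adj x m) (h2 : H.Adj m n) (h3 : H.Adj n y) : False :=
  (not_le.mpr h) (edist_le_three' h1 h2 h3)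

lemma lt23 {H : SimpleGraph V} {x y : V} (h : 3 < H.edist x y) : 2 < H.edist x y :=
  lt_trans (by norm_num) h

lemma c0 {H : SimpleGraph V} {x : V} (h : 3 < H.edist x x) : False := by
  simp [SimpleGraph.edist_self] at h

/-- From a failure of `P2` in `G - e`, produce a pair at distance `> 3` (using `hdel`). -/
lemma exists_far_pair [Fintype V] {G : SimpleGraph V} {u v : V} (huv : G.Adj u v)
    (hdel : ∀ e ∈ G.edgeSet, (G.deleteEdges {e}).ediam ≠ 3)
    {p q : V} (hpq : ¬ P2 (G.deleteEdges {s(u,v)}) p q) :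
    ∃ r s, 3 < (G.deleteEdges {s(u,v)}).edist r s := by
  have hne : Nonempty V := ⟨u⟩
  have h2 : 2 < (G.deleteEdges {s(u,v)}).edist p q := lt_edist_of_not_P2 hpq
  have h3 : 3 ≤ (G.deleteEdges {s(u,v)}).ediam := by
    calc (3:ℕ∞) = 2 + 1 := by norm_num
    _ ≤ (G.deleteEdges {s(u,v)}).edist p q := Order.add_one_le_of_lt h2
    _ ≤ _ := SimpleGraph.edist_le_ediam
  have hne3 : (G.deleteEdges {s(u,v)}).ediam ≠ 3 :=
    hdel _ ((SimpleGraph.mem_edgeSet G).mpr huv)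
  have h4 : 3 < (G.deleteEdges {s(u,v)}).ediam := lt_of_le_of_ne h3 (Ne.symm hne3)
  obtain ⟨r, s, hrs⟩ := SimpleGraph.exists_edist_eq_ediam_of_finite
    (G := G.deleteEdges {s(u,v)})
  exact ⟨r, s, hrs ▸ h4⟩

/-- Classification of far pairs in `G - uv`. -/
lemma class_lemma {G : SimpleGraph V} {u v : V}
    (hP2 : ∀ x y, P2 G x y) {r s : V}
    (h : 3 < (G.deleteEdges {s(u,v)}).edist r s) :
    3 < (G.deleteEdges {s(u,v)}).edist u v
    ∨ (∃ y, G.Adj v y ∧ 3 < (G.deleteEdges {s(u,v)}).edist u y)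
    ∨ (∃ x, G.Adj u x ∧ 3 < (G.deleteEdges {s(u,v)}).edist v x) := by
  rcases hP2 r s with rfl | hadj | ⟨m, h1, h2⟩
  · exact absurd h (by simp [SimpleGraph.edist_self])
  · by_cases he : s(r,s) = s(u,v)
    · rw [Sym2.eq_iff] at he
      rcases he with ⟨rfl, rfl⟩ | ⟨rfl, rfl⟩
      · exact Or.inl h
      · exact Or.inl (by rwa [SimpleGraph.edist_comm] at h)
    · exact absurd (delAdj hadj he) (fun ha => c1 (lt23 h) ha)
  · by_cases h1e : s(r,m) = s(u,v)
    · rw [Sym2.eq_iff] at h1e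
      rcases h1e with ⟨rfl, rfl⟩ | ⟨rfl, rfl⟩
      · exact Or.inr (Or.inl ⟨s, h2, h⟩)
      · exact Or.inr (Or.inr ⟨s, h2, h⟩)
    · by_cases h2e : s(m,s) = s(u,v)
      · rw [Sym2.eq_iff] at h2e
        rcases h2e with ⟨rfl, rfl⟩ | ⟨rfl, rfl⟩
        · exact Or.inr (Or.inr ⟨r, h1.symm, by rwa [SimpleGraph.edist_comm] at h⟩)
        · exact Or.inr (Or.inl ⟨r, h1.symm, by rwa [SimpleGraph.edist_comm] at h⟩)
      · exact absurd (delAdj h1 h1e) (fun ha => c2 (lt23 h) ha (delAdj h2 h2e))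


/-- Core lemma: there is no vertex `y` adjacent to `v` at distance `> 3` from `u` in `G - uv`. -/
lemma R2 [Fintype V] {G : SimpleGraph V}
    (hP2 : ∀ x y, P2 G x y)
    (hdel : ∀ e ∈ G.edgeSet, (G.deleteEdges {e}).ediam ≠ 3)
    (hge : ∀ v0 : V, ∃ b1 b2, G.Adj b1 b2 ∧ b1 ≠ v0 ∧ b2 ≠ v0)
    {u v y : V} (huv : G.Adj u v) (hvy : G.Adj v y)
    (hy : 3 < (G.deleteEdges {s(u,v)}).edist u y) : False := by
  have huv' : u ≠ v := huv.ne
  have hyv : y ≠ v := hvy.ne'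
  have hyu : y ≠ u := by
    rintro rfl; exact c0 hy
  have hnuy : ¬ G.Adj u y := by
    intro h
    exact c1 (lt23 hy) (delAdj h (sym2_ne (by tauto)))
  -- every neighbor z ≠ v of y is adjacent to v and has no neighbor in N(u) \ {v}
  have hz : ∀ z, G.Adj y z → z ≠ v →
      G.Adj v z ∧ ∀ a, G.Adj u a → a ≠ v → ¬ G.Adj a z := by
    intro z hyz hzv
    have hzy : z ≠ y := hyz.ne'
    have hzu : z ≠ u := by
      rintro rfl; exact hnuy hyz.symm
    have hde : 2 < (G.deleteEdges {s(u,v)}).edist u z := by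
      by_contra hc
      have h1 : (G.deleteEdges {s(u,v)}).edist z y ≤ 1 :=
        edist_le_one' (delAdj hyz.symm (sym2_ne (by tauto)))
      have : (G.deleteEdges {s(u,v)}).edist u y ≤ 2 + 1 :=
        le_trans (SimpleGraph.edist_triangle (v := z)) (add_le_add (not_lt.mp hc) h1)
      exact (not_le.mpr hy) (le_trans this (by norm_num))
    constructor
    · rcases hP2 u z with rfl | hA | ⟨m, hm1, hm2⟩
      · exact absurd rfl hzu.symm ; 
      · exact absurd (delAdj hA (sym2_ne (by tauto))) (fun ha => c1 hde ha)
      · by_cases hmv : m = v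
        · subst hmv; exact hm2
        · have hmu : m ≠ u := hm1.ne'
          exact absurd (delAdj hm1 (sym2_ne (by tauto)))
            (fun ha => c2 hde ha (delAdj hm2 (sym2_ne (by tauto))))
    · intro a hua hav haz
      have hau : a ≠ u := hua.ne'
      exact c2 hde (delAdj hua (sym2_ne (by tauto))) (delAdj haz (sym2_ne (by tauto)))
  -- also y itself has no neighbor in N(u) \ {v}
  have noAy : ∀ a, G.Adj u a → a ≠ v → ¬ G.Adj a y := by
    intro a hua hav hay
    have hau : a ≠ u := hua.ne'
    exact c2 (lt23 hy) (delAdj hua (sym2_ne (by tauto))) (delAdj hay (sym2_ne (by tauto)))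
  by_cases hcase : ∃ z, G.Adj y z ∧ z ≠ v
  · obtain ⟨z0, hyz0, hz0v⟩ := hcase
    obtain ⟨hvz0, -⟩ := hz z0 hyz0 hz0v
    have hz0y : z0 ≠ y := hyz0.ne'
    have hz0u : z0 ≠ u := by rintro rfl; exact hnuy hyz0.symm
    -- delete the edge vy
    have hnp : ¬ P2 (G.deleteEdges {s(v,y)}) u y := by
      rintro (rfl | hA | ⟨m, hm1, hm2⟩)
      · exact hyu rfl
      · exact hnuy (adj_of_delAdj hA)
      · have gm1 : G.Adj u m := adj_of_delAdj hm1
        have gm2 : G.Adj m y := adj_of_delAdj hm2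
        by_cases hmv : m = v
        · subst hmv
          exact (SimpleGraph.deleteEdges_adj.mp hm2).2 (by simp)
        · exact noAy m gm1 hmv gm2
    obtain ⟨r, s, hrs⟩ := exists_far_pair hvy hdel hnp
    rcases class_lemma hP2 hrs with hcc | ⟨w, hyw, h3w⟩ | ⟨w, hvw, h3w⟩
    · exact c2 (lt23 hcc) (delAdj hvz0 (sym2_ne (by tauto)))
        (delAdj hyz0.symm (sym2_ne (by tauto)))
    · by_cases hwv : w = v
      · subst hwv; exact c0 h3w
      · have hvw : G.Adj v w := (hz w hyw hwv).1
        have hwy : w ≠ y := hyw.ne'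
        exact c1 (lt23 h3w) (delAdj hvw (sym2_ne (by tauto)))
    · by_cases hwy : w = y
      · subst hwy; exact c0 h3w
      · have hwv : w ≠ v := hvw.ne'
        exact c3 h3w (delAdj hyz0 (sym2_ne (by tauto)))
          (delAdj hvz0.symm (sym2_ne (by tauto)))
          (delAdj hvw (sym2_ne (by tauto)))
  · push_neg at hcase
    have huniv : ∀ x, x ≠ y → x ≠ v → G.Adj v x := by
      intro x hxy hxv
      rcases hP2 y x with rfl | hA | ⟨m, hm1, hm2⟩
      · exact absurd rfl hxy.symm
      · exact absurd (hcase x hA) hxv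
      · have := hcase m hm1; subst this; exact hm2
    by_cases hA : ∃ a, G.Adj u a ∧ a ≠ v
    · obtain ⟨a, hua, hav⟩ := hA
      have hay : a ≠ y := by rintro rfl; exact hnuy hua
      have hau : a ≠ u := hua.ne'
      have hva : G.Adj v a := huniv a hay hav
      exact c3 hy (delAdj hua (sym2_ne (by tauto)))
        (delAdj hva.symm (sym2_ne (by tauto)))
        (delAdj hvy (sym2_ne (by tauto)))
    · push_neg at hA
      obtain ⟨b1, b2, hb, hb1v, hb2v⟩ := hge v
      have hb12 : b1 ≠ b2 := hb.ne
      have hb1u : b1 ≠ u := by rintro rfl; exact hb2v (hA b2 hb)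
      have hb2u : b2 ≠ u := by rintro rfl; exact hb1v (hA b1 hb.symm)
      have hb1y : b1 ≠ y := by rintro rfl; exact hb2v (hcase b2 hb)
      have hb2y : b2 ≠ y := by rintro rfl; exact hb1v (hcase b1 hb.symm)
      have hvb1 : G.Adj v b1 := huniv b1 hb1y hb1v
      have hvb2 : G.Adj v b2 := huniv b2 hb2y hb2v
      have hnp : ¬ P2 (G.deleteEdges {s(v,b1)}) b1 u := by
        rintro (rfl | hA' | ⟨m, hm1, hm2⟩)
        · exact hb1u rfl
        · exact hb1v (hA b1 (adj_of_delAdj hA').symm)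
        · have gm2 : G.Adj m u := adj_of_delAdj hm2
          have hmv : m = v := hA m gm2.symm
          subst hmv
          exact (SimpleGraph.deleteEdges_adj.mp hm1).2 (by rw [Sym2.eq_swap]; simp)
      obtain ⟨r, s, hrs⟩ := exists_far_pair hvb1 hdel hnp
      have hvb1' : v ≠ b1 := hvb1.ne
      rcases class_lemma hP2 hrs with hcc | ⟨w, hb1w, h3w⟩ | ⟨w, hvw, h3w⟩
      · exact c2 (lt23 hcc) (delAdj hvb2 (sym2_ne (by tauto)))
          (delAdj hb.symm (sym2_ne (by tauto)))
      · by_cases hwv : w = v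
        · subst hwv; exact c0 h3w
        · have hwu : w ≠ u := by rintro rfl; exact hb1v (hA b1 hb1w.symm)
          have hwy : w ≠ y := by rintro rfl; exact hb1v (hcase b1 hb1w.symm)
          have hwb1 : w ≠ b1 := hb1w.ne'
          exact c1 (lt23 h3w) (delAdj (huniv w hwy hwv) (sym2_ne (by tauto)))
      · by_cases hwb1 : w = b1
        · subst hwb1; exact c0 h3w
        · exact c3 h3w (delAdj hb (sym2_ne (by tauto)))
            (delAdj hvb2.symm (sym2_ne (by tauto)))
            (delAdj hvw (sym2_ne (by tauto)))


/-- If every shortest connection between `p` and `q` uses the edge `xy`,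
then `x` and `y` are far apart in `G - xy`. -/
lemma bad_edge [Fintype V] {G : SimpleGraph V}
    (hP2 : ∀ x y, P2 G x y)
    (hdel : ∀ e ∈ G.edgeSet, (G.deleteEdges {e}).ediam ≠ 3)
    (hge : ∀ v0 : V, ∃ b1 b2, G.Adj b1 b2 ∧ b1 ≠ v0 ∧ b2 ≠ v0)
    {x y p q : V} (hxy : G.Adj x y)
    (hpq_ne : p ≠ q) (hpq_nadj : ¬ G.Adj p q)
    (hmids : ∀ z, G.Adj p z → G.Adj z q → s(z,p) = s(x,y) ∨ s(z,q) = s(x,y)) :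
    3 < (G.deleteEdges {s(x,y)}).edist x y := by
  have hnp : ¬ P2 (G.deleteEdges {s(x,y)}) p q := by
    rintro (rfl | hA | ⟨m, hm1, hm2⟩)
    · exact hpq_ne rfl
    · exact hpq_nadj (adj_of_delAdj hA)
    · rcases hmids m (adj_of_delAdj hm1) (adj_of_delAdj hm2) with he | he
      · exact (SimpleGraph.deleteEdges_adj.mp hm1).2 (by rw [Set.mem_singleton_iff]; exact Sym2.eq_swap.trans he)
      · exact (SimpleGraph.deleteEdges_adj.mp hm2).2 (by simpa using he)
  obtain ⟨r, s, hrs⟩ := exists_far_pair hxy hdel hnp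
  rcases class_lemma hP2 hrs with hcc | ⟨w, hyw, h3w⟩ | ⟨w, hxw, h3w⟩
  · exact hcc
  · exact absurd h3w (fun h => R2 hP2 hdel hge hxy hyw h)
  · exfalso
    refine R2 hP2 hdel hge hxy.symm hxw ?_
    rw [del_swap G y x]
    exact h3w

/-- If moreover `x` and `y` have a common neighbour `m`, we get a contradiction. -/
lemma star [Fintype V] {G : SimpleGraph V}
    (hP2 : ∀ x y, P2 G x y)
    (hdel : ∀ e ∈ G.edgeSet, (G.deleteEdges {e}).ediam ≠ 3)
    (hge : ∀ v0 : V, ∃ b1 b2, G.Adj b1 b2 ∧ b1 ≠ v0 ∧ b2 ≠ v0)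
    {x y p q m : V} (hxy : G.Adj x y) (hxm : G.Adj x m) (hmy : G.Adj m y)
    (hpq_ne : p ≠ q) (hpq_nadj : ¬ G.Adj p q)
    (hmids : ∀ z, G.Adj p z → G.Adj z q → s(z,p) = s(x,y) ∨ s(z,q) = s(x,y)) :
    False := by
  have hD := bad_edge hP2 hdel hge hxy hpq_ne hpq_nadj hmids
  have hmx : m ≠ x := hxm.ne'
  have hmy' : m ≠ y := hmy.ne
  have hxy' : x ≠ y := hxy.ne
  exact c2 (lt23 hD) (delAdj hxm (sym2_ne (by tauto))) (delAdj hmy (sym2_ne (by tauto)))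

/-- From girth at most four, extract a triangle or a quadrilateral. -/
lemma girth_cases {G : SimpleGraph V} (hg : G.egirth ≤ 4) :
    (∃ x y z : V, G.Adj x y ∧ G.Adj y z ∧ G.Adj z x) ∨
    (∃ x y z w : V, G.Adj x y ∧ G.Adj y z ∧ G.Adj z w ∧ G.Adj w x ∧ x ≠ z ∧ y ≠ w) := by
  have hac : ¬ G.IsAcyclic := by
    intro h
    rw [← SimpleGraph.egirth_eq_top] at h
    rw [h] at hg
    exact (by simp : ¬ ((⊤:ℕ∞) ≤ 4)) hg
  obtain ⟨a, w, hcyc, hlen⟩ := SimpleGraph.exists_egirth_eq_length.mpr hac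
  have h3 : 3 ≤ G.egirth := SimpleGraph.three_le_egirth
  rw [hlen] at hg h3
  have hlen4 : w.length ≤ 4 := by exact_mod_cast hg
  have hlen3 : 3 ≤ w.length := by exact_mod_cast h3
  clear hlen hg h3 hac
  cases w with
  | nil => simp at hlen3
  | cons h1 p =>
    cases p with
    | nil => simp at hlen3
    | cons h2 q =>
      cases q with
      | nil => simp [SimpleGraph.Walk.length_cons] at hlen3
      | cons h3 r =>
        cases r with
        | nil => exact Or.inl ⟨_, _, _, h1, h2, h3⟩
        | cons h4 t =>
          cases t with
          | nil =>
            refine Or.inr ⟨_, _, _, _, h1, h2, h3, h4, ?_, ?_⟩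
            all_goals
              have hnd := hcyc.support_nodup
              simp [SimpleGraph.Walk.support_cons] at hnd
              tauto
          | cons h5 t2 =>
            exfalso
            simp only [SimpleGraph.Walk.length_cons] at hlen4
            omega

/-- From girth at most four: for any vertex there is an edge avoiding it. -/
lemma girth_edge {G : SimpleGraph V} (hg : G.egirth ≤ 4) :
    ∀ v0 : V, ∃ b1 b2, G.Adj b1 b2 ∧ b1 ≠ v0 ∧ b2 ≠ v0 := by
  intro v0
  rcases girth_cases hg with ⟨x, y, z, hxy, hyz, hzx⟩ | ⟨x, y, z, w, hxy, hyz, hzw, hwx, hxz, hyw⟩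
  · by_cases hx : x = v0
    · subst hx; exact ⟨y, z, hyz, hxy.ne', hzx.ne⟩
    · by_cases hy : y = v0
      · subst hy; exact ⟨z, x, hzx, hyz.ne', hxy.ne⟩
      · exact ⟨x, y, hxy, hx, hy⟩
  · by_cases hx : x = v0
    · exact ⟨y, z, hyz, fun h => hxy.ne' (h.trans hx.symm), fun h => hxz (hx.trans h.symm)⟩
    · by_cases hy : y = v0
      · exact ⟨z, w, hzw, fun h => hyz.ne' (h.trans hy.symm), fun h => hyw (hy.trans h.symm)⟩
      · exact ⟨x, y, hxy, hx, hy⟩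


section Final

variable [Fintype V] {G : SimpleGraph V}

/-- No common neighbour of the endpoints of a far-deleted edge. -/
lemma fc_b0 {u v : V} (huv : G.Adj u v) (hD : 3 < (G.deleteEdges {s(u,v)}).edist u v) :
    ∀ m, G.Adj u m → G.Adj m v → False := by
  intro m h1 h2
  have hmu : m ≠ u := h1.ne'
  have hmv : m ≠ v := h2.ne
  have huv' : u ≠ v := huv.ne
  exact c2 (lt23 hD) (delAdj h1 (sym2_ne (by tauto))) (delAdj h2 (sym2_ne (by tauto)))

/-- No edges between the punctured neighbourhoods. -/
lemma fc_b2 {u v : V} (huv : G.Adj u v) (hD : 3 < (G.deleteEdges {s(u,v)}).edist u v) :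
    ∀ a b, G.Adj u a → a ≠ v → G.Adj v b → b ≠ u → ¬ G.Adj a b := by
  intro a b hua hav hvb hbu hab
  have hau : a ≠ u := hua.ne'
  have hbv : b ≠ v := hvb.ne'
  have huv' : u ≠ v := huv.ne
  exact c3 hD (delAdj hua (sym2_ne (by tauto))) (delAdj hab (sym2_ne (by tauto)))
    (delAdj hvb.symm (sym2_ne (by tauto)))

/-- The punctured neighbourhood of `u` is independent. -/
lemma fc_bA (hP2 : ∀ x y, P2 G x y)
    (hdel : ∀ e ∈ G.edgeSet, (G.deleteEdges {e}).ediam ≠ 3)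
    (hge : ∀ v0 : V, ∃ b1 b2, G.Adj b1 b2 ∧ b1 ≠ v0 ∧ b2 ≠ v0)
    {u v : V} (huv : G.Adj u v) (hD : 3 < (G.deleteEdges {s(u,v)}).edist u v) :
    ∀ a a', G.Adj u a → a ≠ v → G.Adj u a' → a' ≠ v → ¬ G.Adj a a' := by
  intro a a' hua hav hua' hav' haa
  refine star hP2 hdel hge hua hua' haa.symm hav (fun h => fc_b0 huv hD a hua h) ?_
  intro z h1 h2
  by_cases hzu : z = u
  · subst hzu; exact Or.inl rfl
  · exact absurd h1 (fc_b2 huv hD a z hua hav h2.symm hzu)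

/-- Every vertex away from `u, v` has a neighbour in the punctured neighbourhood of `u`. -/
lemma fc_b5 (hP2 : ∀ x y, P2 G x y) {u v : V} :
    ∀ c, c ≠ u → ¬ G.Adj u c → ¬ G.Adj v c → ∃ a, G.Adj u a ∧ a ≠ v ∧ G.Adj a c := by
  intro c hcu hnu hnv
  rcases hP2 u c with heq | hA | ⟨m, h1, h2⟩
  · exact absurd heq.symm hcu
  · exact absurd hA hnu
  · have hmv : m ≠ v := by rintro rfl; exact hnv h2
    exact ⟨m, h1, hmv, h2⟩

/-- Uniqueness of the neighbour in the punctured neighbourhood of `u`. -/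
lemma fc_b6 (hP2 : ∀ x y, P2 G x y)
    (hdel : ∀ e ∈ G.edgeSet, (G.deleteEdges {e}).ediam ≠ 3)
    (hge : ∀ v0 : V, ∃ b1 b2, G.Adj b1 b2 ∧ b1 ≠ v0 ∧ b2 ≠ v0)
    {u v : V} (huv : G.Adj u v) (hD : 3 < (G.deleteEdges {s(u,v)}).edist u v) :
    ∀ c a1 a2, G.Adj u a1 → a1 ≠ v → G.Adj u a2 → a2 ≠ v →
      a1 ≠ a2 → G.Adj a1 c → G.Adj a2 c → c ≠ u → False := by
  intro c a1 a2 hua1 ha1v hua2 ha2v ha12 ha1c ha2c hcu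
  have ha1u : a1 ≠ u := hua1.ne'
  have ha2u : a2 ≠ u := hua2.ne'
  have hca1 : c ≠ a1 := ha1c.ne'
  have hca2 : c ≠ a2 := ha2c.ne'
  have hD2 : 3 < (G.deleteEdges {s(u,a1)}).edist u a1 := by
    refine bad_edge hP2 hdel hge hua1 ha1v (fun h => fc_b0 huv hD a1 hua1 h) ?_
    intro z h1 h2
    by_cases hzu : z = u
    · subst hzu; exact Or.inl rfl
    · exact absurd h1 (fc_b2 huv hD a1 z hua1 ha1v h2.symm hzu)
  exact c3 hD2 (delAdj hua2 (sym2_ne (by tauto))) (delAdj ha2c (sym2_ne (by tauto)))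
    (delAdj ha1c.symm (sym2_ne (by tauto)))

/-- An edge from the punctured neighbourhood of `u` into the "far" region is itself far. -/
lemma lvl1A (hP2 : ∀ x y, P2 G x y)
    (hdel : ∀ e ∈ G.edgeSet, (G.deleteEdges {e}).ediam ≠ 3)
    (hge : ∀ v0 : V, ∃ b1 b2, G.Adj b1 b2 ∧ b1 ≠ v0 ∧ b2 ≠ v0)
    {u v : V} (huv : G.Adj u v) (hD : 3 < (G.deleteEdges {s(u,v)}).edist u v)
    {a c : V} (hua : G.Adj u a) (hav : a ≠ v) (hcu : c ≠ u)
    (hnuc : ¬ G.Adj u c) (hnvc : ¬ G.Adj v c) (hac : G.Adj a c) :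
    3 < (G.deleteEdges {s(a,c)}).edist a c := by
  refine bad_edge hP2 hdel hge hac hcu.symm hnuc ?_
  intro z h1 h2
  have hzv : z ≠ v := by rintro rfl; exact hnvc h2
  by_cases hza : z = a
  · subst hza; exact Or.inr rfl
  · exact absurd h2 (fun _ =>
      fc_b6 hP2 hdel hge huv hD c z a h1 hzv hua hav hza h2 hac hcu)

/-- An edge between two vertices of the "far" region is itself far. -/
lemma lvl2 (hP2 : ∀ x y, P2 G x y)
    (hdel : ∀ e ∈ G.edgeSet, (G.deleteEdges {e}).ediam ≠ 3)
    (hge : ∀ v0 : V, ∃ b1 b2, G.Adj b1 b2 ∧ b1 ≠ v0 ∧ b2 ≠ v0)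
    {u v : V} (huv : G.Adj u v) (hD : 3 < (G.deleteEdges {s(u,v)}).edist u v)
    {x y : V} (hxu : x ≠ u) (hnux : ¬ G.Adj u x) (hnvx : ¬ G.Adj v x)
    (hnuy : ¬ G.Adj u y) (hxy : G.Adj x y) :
    3 < (G.deleteEdges {s(x,y)}).edist x y := by
  obtain ⟨a, hua, hav, hax⟩ := fc_b5 hP2 x hxu hnux hnvx
  have hD2 := lvl1A hP2 hdel hge huv hD hua hav hxu hnux hnvx hax
  have hya : y ≠ a := by rintro rfl; exact hnuy hua
  have hax' : a ≠ x := hax.ne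
  have hxy' : x ≠ y := hxy.ne
  have hnya : ¬ G.Adj y a := by
    intro h
    have hay : a ≠ y := h.ne'
    exact c2 (lt23 hD2) (delAdj h.symm (sym2_ne (by tauto)))
      (delAdj hxy.symm (sym2_ne (by tauto)))
  refine bad_edge hP2 hdel hge hxy hya hnya ?_
  intro w h1 h2
  by_cases hwx : w = x
  · subst hwx; exact Or.inl rfl
  · exfalso
    have hwa : w ≠ a := h2.ne
    have hwy : w ≠ y := h1.ne'
    exact c3 hD2 (delAdj h2.symm (sym2_ne (by tauto))) (delAdj h1.symm (sym2_ne (by tauto)))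
      (delAdj hxy.symm (sym2_ne (by tauto)))

end Final


section Endgame

variable [Fintype V] {G : SimpleGraph V}

lemma edist_le_two_of_P2 {H : SimpleGraph V} {x y : V} (h : P2 H x y) : H.edist x y ≤ 2 := by
  rcases h with rfl | hA | ⟨m, h1, h2⟩
  · simp
  · exact le_trans (edist_le_one' hA) (by norm_num)
  · exact edist_le_two' h1 h2

lemma hD_swap {u v : V} (hD : 3 < (G.deleteEdges {s(u,v)}).edist u v) :
    3 < (G.deleteEdges {s(v,u)}).edist v u := by
  rw [← del_swap G u v, SimpleGraph.edist_comm]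
  exact hD

lemma tri_no (hP2 : ∀ x y, P2 G x y)
    (hdel : ∀ e ∈ G.edgeSet, (G.deleteEdges {e}).ediam ≠ 3)
    (hge : ∀ v0 : V, ∃ b1 b2, G.Adj b1 b2 ∧ b1 ≠ v0 ∧ b2 ≠ v0)
    {u v : V} (huv : G.Adj u v) (hD : 3 < (G.deleteEdges {s(u,v)}).edist u v)
    {p q r : V} (hpq : G.Adj p q) (hqr : G.Adj q r) (hrp : G.Adj r p) : p ≠ u := by
  rintro rfl
  by_cases hqv : q = v
  · subst hqv
    exact fc_b0 huv hD r hrp.symm hqr.symm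
  · by_cases hrv : r = v
    · subst hrv
      exact fc_b0 huv hD q hpq hqr
    · exact fc_bA hP2 hdel hge huv hD q r hpq hqv hrp.symm hrv hqr

lemma quad_no (hP2 : ∀ x y, P2 G x y)
    (hdel : ∀ e ∈ G.edgeSet, (G.deleteEdges {e}).ediam ≠ 3)
    (hge : ∀ v0 : V, ∃ b1 b2, G.Adj b1 b2 ∧ b1 ≠ v0 ∧ b2 ≠ v0)
    {u v : V} (huv : G.Adj u v) (hD : 3 < (G.deleteEdges {s(u,v)}).edist u v)
    {p q r t : V} (hpq : G.Adj p q) (hqr : G.Adj q r) (hrt : G.Adj r t) (htp : G.Adj t p)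
    (hpr : p ≠ r) (hqt : q ≠ t) : p ≠ u := by
  rintro rfl
  by_cases hqv : q = v
  · subst hqv
    exact fc_b2 huv hD t r htp.symm (Ne.symm hqt) hqr (Ne.symm hpr) hrt.symm
  · by_cases htv : t = v
    · subst htv
      exact fc_b2 huv hD q r hpq hqv hrt.symm (Ne.symm hpr) hqr
    · exact fc_b6 hP2 hdel hge huv hD r q t hpq hqv htp.symm htv hqt hqr hrt.symm
        (Ne.symm hpr)

lemma tri_killA (hP2 : ∀ x y, P2 G x y)
    (hdel : ∀ e ∈ G.edgeSet, (G.deleteEdges {e}).ediam ≠ 3)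
    (hge : ∀ v0 : V, ∃ b1 b2, G.Adj b1 b2 ∧ b1 ≠ v0 ∧ b2 ≠ v0)
    {u v : V} (huv : G.Adj u v) (hD : 3 < (G.deleteEdges {s(u,v)}).edist u v)
    {p q r : V} (hpq : G.Adj p q) (hqr : G.Adj q r) (hrp : G.Adj r p)
    (hup : G.Adj u p) (hpv : p ≠ v) (hqu : q ≠ u) : False := by
  have hqv : q ≠ v := by rintro rfl; exact fc_b0 huv hD p hup hpq
  have hnuq : ¬ G.Adj u q := fun h => fc_bA hP2 hdel hge huv hD p q hup hpv h hqv hpq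
  have hnvq : ¬ G.Adj v q := fun h => fc_b2 huv hD p q hup hpv h hqu hpq
  have hD2 := lvl1A hP2 hdel hge huv hD hup hpv hqu hnuq hnvq hpq
  have hrq : r ≠ q := hqr.ne'
  have hpq' : p ≠ q := hpq.ne
  have hrp' : r ≠ p := hrp.ne
  exact c2 (lt23 hD2) (delAdj hrp.symm (sym2_ne (by tauto)))
    (delAdj hqr.symm (sym2_ne (by tauto)))

lemma quad_killA (hP2 : ∀ x y, P2 G x y)
    (hdel : ∀ e ∈ G.edgeSet, (G.deleteEdges {e}).ediam ≠ 3)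
    (hge : ∀ v0 : V, ∃ b1 b2, G.Adj b1 b2 ∧ b1 ≠ v0 ∧ b2 ≠ v0)
    {u v : V} (huv : G.Adj u v) (hD : 3 < (G.deleteEdges {s(u,v)}).edist u v)
    {p q r t : V} (hpq : G.Adj p q) (hqr : G.Adj q r) (hrt : G.Adj r t) (htp : G.Adj t p)
    (hpr : p ≠ r) (hqt : q ≠ t)
    (hup : G.Adj u p) (hpv : p ≠ v) (hqu : q ≠ u) : False := by
  have hqv : q ≠ v := by rintro rfl; exact fc_b0 huv hD p hup hpq
  have hnuq : ¬ G.Adj u q := fun h => fc_bA hP2 hdel hge huv hD p q hup hpv h hqv hpq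
  have hnvq : ¬ G.Adj v q := fun h => fc_b2 huv hD p q hup hpv h hqu hpq
  have hD2 := lvl1A hP2 hdel hge huv hD hup hpv hqu hnuq hnvq hpq
  have htq : t ≠ q := Ne.symm hqt
  have hpq' : p ≠ q := hpq.ne
  have htp' : t ≠ p := htp.ne
  have hrp' : r ≠ p := Ne.symm hpr
  have hrq : r ≠ q := hqr.ne'
  exact c3 hD2 (delAdj htp.symm (sym2_ne (by tauto))) (delAdj hrt.symm (sym2_ne (by tauto)))
    (delAdj hqr.symm (sym2_ne (by tauto)))

lemma final_case (hP2 : ∀ x y, P2 G x y)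
    (hdel : ∀ e ∈ G.edgeSet, (G.deleteEdges {e}).ediam ≠ 3)
    (hge : ∀ v0 : V, ∃ b1 b2, G.Adj b1 b2 ∧ b1 ≠ v0 ∧ b2 ≠ v0)
    (hgirth : G.egirth ≤ 4)
    {u v : V} (huv : G.Adj u v) (hD : 3 < (G.deleteEdges {s(u,v)}).edist u v) : False := by
  have huv' := huv.symm
  have hD' := hD_swap hD
  rcases girth_cases hgirth with ⟨x, y, z, hxy, hyz, hzx⟩ |
    ⟨x, y, z, w, hxy, hyz, hzw, hwx, hxz, hyw⟩
  · have hxu := tri_no hP2 hdel hge huv hD hxy hyz hzx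
    have hyu := tri_no hP2 hdel hge huv hD hyz hzx hxy
    have hzu := tri_no hP2 hdel hge huv hD hzx hxy hyz
    have hxv := tri_no hP2 hdel hge huv' hD' hxy hyz hzx
    have hyv := tri_no hP2 hdel hge huv' hD' hyz hzx hxy
    have hzv := tri_no hP2 hdel hge huv' hD' hzx hxy hyz
    by_cases hux : G.Adj u x
    · exact tri_killA hP2 hdel hge huv hD hxy hyz hzx hux hxv hyu
    by_cases hvx : G.Adj v x
    · exact tri_killA hP2 hdel hge huv' hD' hxy hyz hzx hvx hxu hyv
    by_cases huy : G.Adj u y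
    · exact tri_killA hP2 hdel hge huv hD hyz hzx hxy huy hyv hzu
    by_cases hvy : G.Adj v y
    · exact tri_killA hP2 hdel hge huv' hD' hyz hzx hxy hvy hyu hzv
    by_cases huz : G.Adj u z
    · exact tri_killA hP2 hdel hge huv hD hzx hxy hyz huz hzv hxu
    by_cases hvz : G.Adj v z
    · exact tri_killA hP2 hdel hge huv' hD' hzx hxy hyz hvz hzu hxv
    have hD3 := lvl2 hP2 hdel hge huv hD hxu hux hvx huy hxy
    have hzy : z ≠ y := hyz.ne'
    have hzx' : z ≠ x := hzx.ne
    have hxy' : x ≠ y := hxy.ne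
    exact c2 (lt23 hD3) (delAdj hzx.symm (sym2_ne (by tauto)))
      (delAdj hyz.symm (sym2_ne (by tauto)))
  · have hzx : z ≠ x := Ne.symm hxz
    have hwy : w ≠ y := Ne.symm hyw
    have hxu := quad_no hP2 hdel hge huv hD hxy hyz hzw hwx hxz hyw
    have hyu := quad_no hP2 hdel hge huv hD hyz hzw hwx hxy hyw hzx
    have hzu := quad_no hP2 hdel hge huv hD hzw hwx hxy hyz hzx hwy
    have hwu := quad_no hP2 hdel hge huv hD hwx hxy hyz hzw hwy hxz
    have hxv := quad_no hP2 hdel hge huv' hD' hxy hyz hzw hwx hxz hyw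
    have hyv := quad_no hP2 hdel hge huv' hD' hyz hzw hwx hxy hyw hzx
    have hzv := quad_no hP2 hdel hge huv' hD' hzw hwx hxy hyz hzx hwy
    have hwv := quad_no hP2 hdel hge huv' hD' hwx hxy hyz hzw hwy hxz
    by_cases hux : G.Adj u x
    · exact quad_killA hP2 hdel hge huv hD hxy hyz hzw hwx hxz hyw hux hxv hyu
    by_cases hvx : G.Adj v x
    · exact quad_killA hP2 hdel hge huv' hD' hxy hyz hzw hwx hxz hyw hvx hxu hyv
    by_cases huy : G.Adj u y
    · exact quad_killA hP2 hdel hge huv hD hyz hzw hwx hxy hyw hzx huy hyv hzu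
    by_cases hvy : G.Adj v y
    · exact quad_killA hP2 hdel hge huv' hD' hyz hzw hwx hxy hyw hzx hvy hyu hzv
    by_cases huz : G.Adj u z
    · exact quad_killA hP2 hdel hge huv hD hzw hwx hxy hyz hzx hwy huz hzv hwu
    by_cases hvz : G.Adj v z
    · exact quad_killA hP2 hdel hge huv' hD' hzw hwx hxy hyz hzx hwy hvz hzu hwv
    by_cases huw : G.Adj u w
    · exact quad_killA hP2 hdel hge huv hD hwx hxy hyz hzw hwy hxz huw hwv hxu
    by_cases hvw : G.Adj v w
    · exact quad_killA hP2 hdel hge huv' hD' hwx hxy hyz hzw hwy hxz hvw hwu hxv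
    have hD3 := lvl2 hP2 hdel hge huv hD hxu hux hvx huy hxy
    have hxy' : x ≠ y := hxy.ne
    have hwx' : w ≠ x := hwx.ne
    have hzy : z ≠ y := hyz.ne'
    exact c3 hD3 (delAdj hwx.symm (sym2_ne (by tauto)))
      (delAdj hzw.symm (sym2_ne (by tauto)))
      (delAdj hyz.symm (sym2_ne (by tauto)))

end Endgame


end DelDiam

open DelDiam in
/-- Let `G` be a finite simple graph with at least four vertices,
diameter two, and girth at most four, such that for every edge `e` of `G` the graph
`G − e` does not have diameter three (a disconnected graph having infinite diameter).
Then for every edge `e` of `G`, the graph `G − e` is connected and has diameter exactly two. -/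
theorem deleteEdge_diam_two {V : Type*} [Fintype V] (G : SimpleGraph V)
    (hcard : 4 ≤ Fintype.card V) (hG : G.Connected) (hdiam : G.diam = 2)
    (hgirth : G.egirth ≤ 4)
    (hdel : ∀ e ∈ G.edgeSet, (G.deleteEdges {e}).ediam ≠ 3) :
    ∀ e ∈ G.edgeSet, (G.deleteEdges {e}).Connected ∧ (G.deleteEdges {e}).diam = 2 := by
  have hNE : Nonempty V := Fintype.card_pos_iff.mp (by omega)
  have hdne : G.ediam ≠ ⊤ :=
    SimpleGraph.ediam_ne_top_of_diam_ne_zero (by rw [hdiam]; norm_num)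
  have hEG : G.ediam = 2 := by
    calc G.ediam = ((G.ediam.toNat : ℕ∞)) := (ENat.coe_toNat hdne).symm
    _ = ((G.diam : ℕ∞)) := rfl
    _ = 2 := by rw [hdiam]; rfl
  have hP2 : ∀ x y, P2 G x y := fun x y =>
    P2_of_edist_le_two (le_trans SimpleGraph.edist_le_ediam (le_of_eq hEG))
  have hge := girth_edge hgirth
  intro e he
  revert he
  refine Sym2.ind (fun u v => ?_) e
  intro he
  have huv : G.Adj u v := (SimpleGraph.mem_edgeSet G).mp he
  have hED : (G.deleteEdges {s(u,v)}).ediam ≤ 2 := by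
    by_contra hc
    rw [SimpleGraph.ediam_le_iff] at hc
    push_neg at hc
    obtain ⟨p, q, hpq⟩ := hc
    have hnp : ¬ P2 (G.deleteEdges {s(u,v)}) p q := fun h => absurd (edist_le_two_of_P2 h)
      (not_le.mpr hpq)
    obtain ⟨r, s', hrs⟩ := exists_far_pair huv hdel hnp
    rcases class_lemma hP2 hrs with hcc | ⟨y, hvy, h3⟩ | ⟨x, hux, h3⟩
    · exact final_case hP2 hdel hge hgirth huv hcc
    · exact R2 hP2 hdel hge huv hvy h3
    · refine R2 hP2 hdel hge huv.symm hux ?_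
      rw [del_swap G v u]
      exact h3
  have hnadj : ¬ (G.deleteEdges {s(u,v)}).Adj u v := by
    simp [SimpleGraph.deleteEdges_adj]
  have hlow : 2 ≤ (G.deleteEdges {s(u,v)}).edist u v := by
    rcases eq_or_ne ((G.deleteEdges {s(u,v)}).edist u v) ⊤ with h | h
    · rw [h]; exact le_top
    · lift (G.deleteEdges {s(u,v)}).edist u v to ℕ using h with d hd
      have h0 : d ≠ 0 := by
        intro h0
        have : (G.deleteEdges {s(u,v)}).edist u v = 0 := by rw [← hd, h0]; rfl
        exact huv.ne (SimpleGraph.edist_eq_zero_iff.mp this)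
      have h1 : d ≠ 1 := by
        intro h1
        have : (G.deleteEdges {s(u,v)}).edist u v = 1 := by rw [← hd, h1]; rfl
        exact hnadj (SimpleGraph.edist_eq_one_iff_adj.mp this)
      exact_mod_cast (by omega : 2 ≤ d)
  have hEq : (G.deleteEdges {s(u,v)}).ediam = 2 :=
    le_antisymm hED (le_trans hlow SimpleGraph.edist_le_ediam)
  constructor
  · by_contra hnc
    have := SimpleGraph.ediam_eq_top_of_not_connected hnc
    rw [hEq] at this
    exact (by norm_num : (2:ℕ∞) ≠ ⊤) this
  · show (G.deleteEdges {s(u,v)}).ediam.toNat = 2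
    rw [hEq]
    rfl
end

section
/- A finite simple graph G has a connected spanning subgraph of diameter exactly three if and only if one of the following holds: (i) G is a complete graph with at least four vertices; (ii) G is connected with diameter two and girth at most four; (iii) G is connected with diameter three. -/
/-!
If `H ≤ G` is spanning of diameter three, then `G` has diameter at most three and at least four
vertices; if `G` has diameter two, an edge `xy` of `G` missing from `H` closes an `H`-path of length
at most three into a cycle of length at most four.

Conversely, let `G` have diameter at most two and a cycle of length at most four. Deleting an edge
`xy` lying on a triangle or a `4`-cycle leaves diameter at most three, and exactly three when `xy`
lies on no triangle. So only triangle edges remain to be handled, by induction on `G`: deleting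
`xy` from a triangle `xyz` either gives diameter three, or a smaller graph to which induction
applies, or a graph `G - xy` of diameter two and girth at least five. In the last case deleting
`xz`, and if necessary afterwards `xy`, produces diameter three.
-/

open SimpleGraph

namespace SimpleGraph

variable {V : Type*} {G H : SimpleGraph V} {a b w x y z x' y' : V}

lemma edist_le_two_iff : G.edist a b ≤ 2 ↔ a = b ∨ G.Adj a b ∨ ∃ w, G.Adj a w ∧ G.Adj w b := by
  rw [← not_lt, two_lt_edist_iff, Set.eq_empty_iff_forall_notMem]
  simp only [mem_commonNeighbors, not_forall, not_and_or, not_not]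
  grind [Adj.symm]

lemma ediam_eq_three_of_two_lt_edist (h : G.ediam ≤ 3) (hab : 2 < G.edist a b) :
    G.ediam = 3 :=
  h.antisymm (Order.add_one_le_of_lt (hab.trans_le edist_le_ediam))

lemma ediam_eq_three_or_le_two (h : G.ediam ≤ 3) : G.ediam = 3 ∨ G.ediam ≤ 2 :=
  h.eq_or_lt.imp_right Order.le_of_lt_add_one

lemma connected_and_diam_eq_iff_ediam_eq [Finite V] {n : ℕ} (hn : n ≠ 0) :
    G.Connected ∧ G.diam = n ↔ G.ediam = n := by
  constructor
  · rintro ⟨hG, rfl⟩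
    have : Nonempty V := hG.nonempty
    exact (ENat.natCast_toNat (connected_iff_ediam_ne_top.mp hG)).symm
  · intro h
    have : Nontrivial V := nontrivial_of_ediam_ne_zero (by rw [h]; exact_mod_cast hn)
    exact ⟨connected_of_ediam_ne_top (by simp [h]), by simp [diam, h]⟩

lemma egirth_le_four (hxy : G.Adj x y) (hyz : G.Adj y z) (hzw : G.Adj z w) (hwx : G.Adj w x)
    (hxz : x ≠ z) (hyw : y ≠ w) : G.egirth ≤ 4 := by
  have := hxy.ne; have := hyz.ne; have := hzw.ne; have := hwx.ne
  have hc : (Walk.cons hxy (.cons hyz (.cons hzw (.cons hwx .nil)))).IsCycle :=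
    { edges_nodup := by aesop
      ne_nil := by aesop
      support_nodup := by aesop }
  simpa using egirth_le_length hc

lemma Walk.IsCycle.exists_adj_of_length_le_four {p : G.Walk a a} (hp : p.IsCycle)
    (hl : p.length ≤ 4) :
    (∃ x y z, G.Adj x y ∧ G.Adj y z ∧ G.Adj z x) ∨
      ∃ x y z w, G.Adj x y ∧ G.Adj y z ∧ G.Adj z w ∧ G.Adj w x ∧ x ≠ z ∧ y ≠ w := by
  have hlen := hp.three_le_length
  match p, hp with
  | .cons h₁ (.cons h₂ (.cons h₃ .nil)), _ => exact .inl ⟨_, _, _, h₁, h₂, h₃⟩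
  | .cons h₁ (.cons h₂ (.cons h₃ (.cons h₄ .nil))), hp =>
    have hnd := hp.support_nodup
    simp only [Walk.support_cons, Walk.support_nil, List.tail_cons, List.nodup_cons,
      List.mem_cons, List.not_mem_nil] at hnd
    exact .inr ⟨_, _, _, _, h₁, h₂, h₃, h₄, by grind [Adj.ne], by grind⟩
  | .cons _ (.cons _ (.cons _ (.cons _ (.cons _ _)))), _ => simp at hl; omega

lemma exists_adj_of_egirth_le_four (h : G.egirth ≤ 4) :
    (∃ x y z, G.Adj x y ∧ G.Adj y z ∧ G.Adj z x) ∨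
      ∃ x y z w, G.Adj x y ∧ G.Adj y z ∧ G.Adj z w ∧ G.Adj w x ∧ x ≠ z ∧ y ≠ w := by
  have hG : ¬ G.IsAcyclic := fun hG => by simp [hG.egirth_eq_top] at h
  obtain ⟨a, p, hp, hlen⟩ := exists_egirth_eq_length.mpr hG
  exact hp.exists_adj_of_length_le_four (by exact_mod_cast hlen ▸ h)

lemma egirth_le_edist_add_one (hHG : H ≤ G) (hxy : G.Adj x y) (hH : ¬ H.Adj x y) :
    G.egirth ≤ H.edist y x + 1 := by
  by_cases hr : H.Reachable y x
  · obtain ⟨p, hp, hlen⟩ := hr.exists_path_of_dist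
    have hc : (Walk.cons hxy (p.mapLe hHG)).IsCycle := by
      rw [Walk.cons_isCycle_iff, Walk.edges_mapLe_eq_edges]
      exact ⟨hp.mapLe hHG, fun he => hH (p.adj_of_mem_edges he)⟩
    calc G.egirth ≤ (p.length + 1 : ℕ) := by simpa using egirth_le_length hc
      _ = H.edist y x + 1 := by push_cast; rw [hlen, hr.coe_dist_eq_edist]
  · simp [edist_eq_top_of_not_reachable hr]

lemma deleteEdges_adj_of_ne (h : G.Adj a b) (hax : a ≠ x) (hay : a ≠ y) :
    (G.deleteEdges {s(x, y)}).Adj a b :=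
  deleteEdges_adj.mpr ⟨h, by grind [Sym2.eq_iff]⟩

lemma edist_deleteEdges_le_two_s12 (h : G.edist a b ≤ 2) (hax : a ≠ x) (hay : a ≠ y) (hbx : b ≠ x)
    (hby : b ≠ y) : (G.deleteEdges {s(x, y)}).edist a b ≤ 2 := by
  rw [edist_le_two_iff] at h ⊢
  rcases h with rfl | hab | ⟨w, haw, hwb⟩
  · exact .inl rfl
  · exact .inr (.inl (deleteEdges_adj_of_ne hab hax hay))
  · exact .inr (.inr ⟨w, deleteEdges_adj_of_ne haw hax hay,
      (deleteEdges_adj_of_ne hwb.symm hbx hby).symm⟩)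

lemma edist_deleteEdges_le_three_s12 (hG : G.ediam ≤ 2) (hxx' : G.Adj x x') (hyy' : G.Adj y y')
    (hx'y : x' ≠ y) (hy'x : y' ≠ x) (hx'y' : G.edist x' y' ≤ 1) (b : V) :
    (G.deleteEdges {s(x, y)}).edist x b ≤ 3 := by
  set G' := G.deleteEdges {s(x, y)}
  have hx' : G'.edist x x' = 1 :=
    edist_eq_one_iff_adj.mpr (deleteEdges_adj_of_ne hxx'.symm hxx'.ne.symm hx'y).symm
  by_cases hbx : b = x
  · simp [hbx]
  by_cases hby : b = y
  · have hy' : G'.edist y' y = 1 := edist_eq_one_iff_adj.mpr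
      (deleteEdges_adj_of_ne hyy'.symm hy'x hyy'.ne.symm)
    have hx'y'' : G'.edist x' y' ≤ 1 := by
      rw [edist_le_one_iff_adj_or_eq] at hx'y' ⊢
      exact hx'y'.imp_left fun h => deleteEdges_adj_of_ne h hxx'.ne.symm hx'y
    calc G'.edist x b ≤ G'.edist x x' + G'.edist x' y' + G'.edist y' y := by
          rw [hby]
          exact SimpleGraph.edist_triangle.trans (add_le_add_left SimpleGraph.edist_triangle _)
      _ ≤ 1 + 1 + 1 := by rw [hx', hy']; gcongr
      _ = 3 := by norm_num
  calc G'.edist x b ≤ G'.edist x x' + G'.edist x' b := SimpleGraph.edist_triangle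
    _ ≤ 1 + 2 := by
        rw [hx']
        gcongr
        exact edist_deleteEdges_le_two_s12 (edist_le_ediam.trans hG) hxx'.ne.symm hx'y hbx hby
    _ = 3 := by norm_num

/-- `x' = y'` is allowed, so `xy` may lie on a triangle `x x' y` or on a `4`-cycle `x x' y' y`. -/
lemma ediam_deleteEdges_le_three_s12 (hG : G.ediam ≤ 2) (hxx' : G.Adj x x') (hyy' : G.Adj y y')
    (hx'y : x' ≠ y) (hy'x : y' ≠ x) (hx'y' : G.edist x' y' ≤ 1) :
    (G.deleteEdges {s(x, y)}).ediam ≤ 3 := by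
  have hx := edist_deleteEdges_le_three_s12 hG hxx' hyy' hx'y hy'x hx'y'
  have hy := edist_deleteEdges_le_three_s12 hG hyy' hxx' hy'x hx'y (by rwa [edist_comm])
  rw [Sym2.eq_swap] at hy
  refine ediam_le_of_edist_le fun a b => ?_
  by_cases hax : a = x
  · exact hax ▸ hx b
  by_cases hay : a = y
  · exact hay ▸ hy b
  by_cases hbx : b = x
  · rw [hbx, edist_comm]
    exact hx a
  by_cases hby : b = y
  · rw [hby, edist_comm]
    exact hy a
  exact (edist_deleteEdges_le_two_s12 (edist_le_ediam.trans hG) hax hay hbx hby).trans (by norm_num)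

lemma two_lt_edist_deleteEdges (hxy : x ≠ y) (h : ∀ w, G.Adj x w → ¬ G.Adj w y) :
    2 < (G.deleteEdges {s(x, y)}).edist x y := by
  rw [two_lt_edist_iff, Set.eq_empty_iff_forall_notMem]
  refine ⟨hxy, by simp, fun w hw => ?_⟩
  rw [mem_commonNeighbors] at hw
  exact h w (deleteEdges_le _ hw.1) (deleteEdges_le _ hw.2.symm)

lemma ediam_deleteEdges_eq_three (hG : G.ediam ≤ 2) (hxy : G.Adj x y) (hxx' : G.Adj x x')
    (hyy' : G.Adj y y') (hx'y' : G.Adj x' y') (hx'y : x' ≠ y) (hy'x : y' ≠ x)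
    (h : ∀ w, G.Adj x w → ¬ G.Adj w y) :
    (G.deleteEdges {s(x, y)}).ediam = 3 :=
  ediam_eq_three_of_two_lt_edist
    (ediam_deleteEdges_le_three_s12 hG hxx' hyy' hx'y hy'x (edist_eq_one_iff_adj.mpr hx'y').le)
    (two_lt_edist_deleteEdges hxy.ne h)

lemma ediam_deleteEdges_eq_three_of_neighborSet_subset (hG : G.ediam ≤ 2) (hxy : G.Adj x y)
    (hyz : G.Adj y z) (hx : G.neighborSet x ⊆ {y, z}) (hy : G.neighborSet y ⊆ {x, z})
    {u : V} (hux : u ≠ x) (huy : u ≠ y) (huz : u ≠ z) :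
    (G.deleteEdges {s(x, z)}).ediam = 3 := by
  refine ediam_eq_three_of_two_lt_edist (a := x) (b := u)
    (ediam_deleteEdges_le_three_s12 hG hxy hyz.symm hyz.ne hxy.ne.symm (by simp)) ?_
  rw [two_lt_edist_iff, Set.eq_empty_iff_forall_notMem]
  refine ⟨hux.symm, fun h => ?_, fun w hw => ?_⟩
  · have := hx (deleteEdges_le _ h)
    simp_all
  · rw [mem_commonNeighbors] at hw
    rcases hx (deleteEdges_le _ hw.1) with rfl | rfl
    · have := hy (deleteEdges_le _ hw.2.symm)
      simp_all
    · simp at hw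

/-- Since `G - xy` has diameter two and no `4`-cycle, `a` and `y` have a common neighbour `b` in it,
and `x a b y` is then a `4`-cycle of `G - xz` whose edge `xy` lies on no triangle. -/
lemma exists_le_ediam_eq_three_of_adj_deleteEdges (hG : G.ediam ≤ 2) (hxy : G.Adj x y)
    (hyz : G.Adj y z) (hzx : G.Adj z x) (h₁ : (G.deleteEdges {s(x, y)}).ediam ≤ 2)
    (h₂ : 4 < (G.deleteEdges {s(x, y)}).egirth) (hxa : (G.deleteEdges {s(x, y)}).Adj x a)
    (haz : a ≠ z) : ∃ H ≤ G, H.ediam = 3 := by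
  set G₁ := G.deleteEdges {s(x, y)}
  have no_square {p q r t : V} (hpq : G₁.Adj p q) (hqr : G₁.Adj q r) (hrt : G₁.Adj r t)
      (htp : G₁.Adj t p) (hpr : p ≠ r) (hqt : q ≠ t) : False :=
    (egirth_le_four hpq hqr hrt htp hpr hqt).not_gt h₂
  have hzx₁ : G₁.Adj z x := deleteEdges_adj_of_ne hzx hzx.ne hyz.ne.symm
  have hyz₁ : G₁.Adj y z := (deleteEdges_adj_of_ne hyz.symm hzx.ne hyz.ne.symm).symm
  have hxy₁ : ¬ G₁.Adj x y := by simp [G₁]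
  have hay : a ≠ y := by rintro rfl; exact hxy₁ hxa
  obtain ⟨b, hab, hby⟩ : ∃ b, G₁.Adj a b ∧ G₁.Adj b y := by
    rcases edist_le_two_iff.mp (edist_le_ediam.trans h₁ : G₁.edist a y ≤ 2) with h | h | h
    · exact absurd h hay
    · exact (no_square hxa h hyz₁ hzx₁ hxy.ne haz).elim
    · exact h
  have hbx : b ≠ x := by rintro rfl; exact hxy₁ hby
  set G₂ := G.deleteEdges {s(x, z)}
  have lift {p q : V} (h : G₁.Adj p q) (hpx : p ≠ x) (hpz : p ≠ z) : G₂.Adj p q :=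
    deleteEdges_adj_of_ne (deleteEdges_le _ h) hpx hpz
  have hG₂ : G₂.ediam ≤ 3 :=
    ediam_deleteEdges_le_three_s12 hG hxy hyz.symm hyz.ne hxy.ne.symm (by simp)
  rcases ediam_eq_three_or_le_two hG₂ with h | h
  · exact ⟨G₂, deleteEdges_le _, h⟩
  refine ⟨G₂.deleteEdges {s(x, y)}, (deleteEdges_le _).trans (deleteEdges_le _),
    ediam_deleteEdges_eq_three h ?_ (lift hxa.symm hxa.ne.symm haz).symm
      (lift hby.symm hxy.ne.symm hyz.ne) (lift hab hxa.ne.symm haz) hay hbx fun w hxw hwy₂ => ?_⟩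
  · exact (deleteEdges_adj_of_ne hxy.symm hxy.ne.symm hyz.ne).symm
  have hwz : w ≠ z := by rintro rfl; simp [G₂] at hxw
  have hwx : w ≠ x := hxw.ne.symm
  have hwy : w ≠ y := hwy₂.ne
  exact no_square (deleteEdges_adj_of_ne (deleteEdges_le _ hxw).symm hwx hwy).symm
    (deleteEdges_adj_of_ne (deleteEdges_le _ hwy₂) hwx hwy) hyz₁ hzx₁ hxy.ne hwz

lemma exists_le_ediam_eq_three_of_four_lt_egirth_deleteEdges [Fintype V]
    (hV : 4 ≤ Fintype.card V) (hG : G.ediam ≤ 2) (hxy : G.Adj x y) (hyz : G.Adj y z)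
    (hzx : G.Adj z x) (h₁ : (G.deleteEdges {s(x, y)}).ediam ≤ 2)
    (h₂ : 4 < (G.deleteEdges {s(x, y)}).egirth) : ∃ H ≤ G, H.ediam = 3 := by
  by_cases hx : ∃ a, (G.deleteEdges {s(x, y)}).Adj x a ∧ a ≠ z
  · obtain ⟨a, hxa, haz⟩ := hx
    exact exists_le_ediam_eq_three_of_adj_deleteEdges hG hxy hyz hzx h₁ h₂ hxa haz
  by_cases hy : ∃ a, (G.deleteEdges {s(x, y)}).Adj y a ∧ a ≠ z
  · obtain ⟨a, hya, haz⟩ := hy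
    rw [Sym2.eq_swap] at h₁ h₂ hya
    exact exists_le_ediam_eq_three_of_adj_deleteEdges hG hxy.symm hzx.symm hyz.symm h₁ h₂ hya haz
  push Not at hx hy
  classical
  obtain ⟨u, -, hu⟩ := Finset.exists_mem_notMem_of_card_lt_card (s := {x, y, z})
    (t := Finset.univ) (Finset.card_le_three.trans_lt (by rw [Finset.card_univ]; omega))
  simp only [Finset.mem_insert, Finset.mem_singleton, not_or] at hu
  refine ⟨_, deleteEdges_le _, ediam_deleteEdges_eq_three_of_neighborSet_subset hG hxy hyz
    (fun a ha => ?_) (fun a ha => ?_) hu.1 hu.2.1 hu.2.2⟩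
  · by_cases hay : a = y
    · simp [hay]
    · simp [hx a (deleteEdges_adj_of_ne ha.symm ha.ne.symm hay).symm]
  · by_cases hax : a = x
    · simp [hax]
    · simp [hy a (deleteEdges_adj_of_ne (G.adj_symm ha) hax ha.ne.symm).symm]

theorem exists_le_ediam_eq_three [Fintype V] (hV : 4 ≤ Fintype.card V) (hG : G.ediam ≤ 2)
    (hg : G.egirth ≤ 4) : ∃ H ≤ G, H.ediam = 3 := by
  induction G using WellFoundedLT.induction with | _ G ih =>
  have of_triangle {x y z : V} (hxy : G.Adj x y) (hyz : G.Adj y z) (hzx : G.Adj z x) :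
      ∃ H ≤ G, H.ediam = 3 := by
    have hlt : G.deleteEdges {s(x, y)} < G :=
      (deleteEdges_le _).lt_of_ne (by simpa using hxy)
    rcases ediam_eq_three_or_le_two
      (ediam_deleteEdges_le_three_s12 hG hzx.symm hyz hyz.ne.symm hzx.ne (by simp)) with h₁ | h₁
    · exact ⟨_, deleteEdges_le _, h₁⟩
    by_cases h₂ : (G.deleteEdges {s(x, y)}).egirth ≤ 4
    · obtain ⟨H, hH, h⟩ := ih _ hlt h₁ h₂
      exact ⟨H, hH.trans hlt.le, h⟩
    · exact exists_le_ediam_eq_three_of_four_lt_egirth_deleteEdges hV hG hxy hyz hzx h₁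
        (not_le.mp h₂)
  rcases exists_adj_of_egirth_le_four hg with
    ⟨x, y, z, hxy, hyz, hzx⟩ | ⟨x, y, y', x', hxy, hyy', hy'x', hx'x, hxy', hyx'⟩
  · exact of_triangle hxy hyz hzx
  by_cases h : ∃ w, G.Adj x w ∧ G.Adj w y
  · obtain ⟨w, hxw, hwy⟩ := h
    exact of_triangle hxw hwy hxy.symm
  push Not at h
  exact ⟨_, deleteEdges_le _, ediam_deleteEdges_eq_three hG hxy hx'x.symm hyy' hy'x'.symm
    hyx'.symm hxy'.symm h⟩

lemma four_le_card_of_pairwise_ne [Fintype V] (hxy : x ≠ y) (hxz : x ≠ z) (hxw : x ≠ w)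
    (hyz : y ≠ z) (hyw : y ≠ w) (hzw : z ≠ w) : 4 ≤ Fintype.card V := by
  classical
  calc 4 = ({x, y, z, w} : Finset V).card :=
        (Finset.card_eq_four.mpr ⟨x, y, z, w, hxy, hxz, hxw, hyz, hyw, hzw, rfl⟩).symm
    _ ≤ Fintype.card V := Finset.card_le_univ _

lemma four_le_card_of_ediam_eq_two [Fintype V] (hG : G.ediam = 2) (hg : G.egirth ≤ 4) :
    4 ≤ Fintype.card V := by
  rcases exists_adj_of_egirth_le_four hg with
    ⟨x, y, z, hxy, hyz, hzx⟩ | ⟨x, y, z, w, hxy, hyz, hzw, hwx, hxz, hyw⟩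
  · have : Nontrivial V := nontrivial_of_ediam_ne_zero (by rw [hG]; norm_num)
    obtain ⟨a, b, hab, hnab⟩ := (ne_top_iff_exists_not_adj (G := G)).mp fun h => by simp [h] at hG
    have : ∃ w, w ≠ x ∧ w ≠ y ∧ w ≠ z := by
      by_contra! h
      have ha := h a
      have hb := h b
      by_cases hax : a = x <;> by_cases hay : a = y <;> by_cases hbx : b = x <;>
        by_cases hby : b = y <;> simp_all [adj_comm]
    obtain ⟨w, hwx, hwy, hwz⟩ := this
    exact four_le_card_of_pairwise_ne hxy.ne hzx.ne.symm hwx.symm hyz.ne hwy.symm hwz.symm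
  · exact four_le_card_of_pairwise_ne hxy.ne hxz hwx.ne.symm hyz.ne hyw hzw.ne

lemma four_le_card_of_ediam_eq_three [Fintype V] (h : G.ediam = 3) : 4 ≤ Fintype.card V := by
  have : Nonempty V := (nontrivial_of_ediam_ne_zero (by rw [h]; norm_num)).to_nonempty
  obtain ⟨u, v, huv⟩ := G.exists_edist_eq_ediam_of_ne_top (by simp [h])
  have hr : G.Reachable u v := reachable_of_edist_ne_top (by simp [huv, h])
  obtain ⟨p, hp, hlen⟩ := hr.exists_path_of_dist
  have : G.dist u v = 3 := by exact_mod_cast hr.coe_dist_eq_edist.trans (huv.trans h)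
  have := hp.length_lt
  omega

theorem eq_top_or_ediam_eq_two_or_three_of_le_of_ediam_eq_three [Fintype V] (hHG : H ≤ G)
    (hH : H.ediam = 3) :
    (G = ⊤ ∧ 4 ≤ Fintype.card V) ∨ (G.ediam = 2 ∧ G.egirth ≤ 4) ∨ G.ediam = 3 := by
  have : Nontrivial V := nontrivial_of_ediam_ne_zero (by rw [hH]; norm_num)
  have hG : G.ediam ≤ 3 := hH ▸ ediam_anti hHG
  obtain ⟨n, hn⟩ := ENat.ne_top_iff_exists.mp (hG.trans_lt (by decide)).ne
  have h0 : 0 < n := Nat.pos_of_ne_zero (by rintro rfl; exact ediam_ne_zero hn.symm)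
  have h3 : n ≤ 3 := by exact_mod_cast hn ▸ hG
  interval_cases n <;> simp only [Nat.cast_one, Nat.cast_ofNat] at hn
  · exact .inl ⟨ediam_eq_one.mp hn.symm, four_le_card_of_ediam_eq_three hH⟩
  · refine .inr (.inl ⟨hn.symm, ?_⟩)
    obtain ⟨x, y, hxy, hnxy⟩ : ∃ x y, G.Adj x y ∧ ¬ H.Adj x y := by
      by_contra! h
      obtain rfl : H = G := hHG.antisymm fun x y => h x y
      simp [← hn] at hH
    calc G.egirth ≤ H.edist y x + 1 := egirth_le_edist_add_one hHG hxy hnxy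
      _ ≤ 3 + 1 := by gcongr; exact hH ▸ edist_le_ediam
      _ = 4 := by norm_num
  · exact .inr (.inr hn.symm)

end SimpleGraph

/-- A finite simple graph `G` has a connected spanning subgraph of
diameter exactly three if and only if (i) `G` is a complete graph with at least four
vertices, or (ii) `G` is connected with diameter two and girth at most four, or
(iii) `G` is connected with diameter three. -/
theorem spanning_subgraph_diam_three_iff {V : Type*} [Fintype V] (G : SimpleGraph V) :
    (∃ H : SimpleGraph V, H ≤ G ∧ H.Connected ∧ H.diam = 3) ↔
      ((G = ⊤ ∧ 4 ≤ Fintype.card V) ∨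
        (G.Connected ∧ G.diam = 2 ∧ G.egirth ≤ 4) ∨
        (G.Connected ∧ G.diam = 3)) := by
  simp only [← and_assoc, connected_and_diam_eq_iff_ediam_eq three_ne_zero,
    connected_and_diam_eq_iff_ediam_eq two_ne_zero, Nat.cast_ofNat]
  constructor
  · rintro ⟨H, hHG, hH⟩
    exact eq_top_or_ediam_eq_two_or_three_of_le_of_ediam_eq_three hHG hH
  · rintro (⟨rfl, hV⟩ | ⟨hG, hg⟩ | hG)
    · have : Nontrivial V := Fintype.one_lt_card_iff_nontrivial.mp (by omega)
      refine exists_le_ediam_eq_three hV (by simp) ?_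
      rw [egirth_top (by simp [ENat.card_eq_coe_fintype_card]; omega)]
      norm_num
    · exact exists_le_ediam_eq_three (four_le_card_of_ediam_eq_two hG hg) hG.le hg
    · exact ⟨G, le_rfl, hG⟩
end

section
/- Let G be a finite simple connected graph of diameter two whose girth is at least five (including the acyclic case of infinite girth). Then G has no connected spanning subgraph of diameter three. -/
/-- Let `G` be a finite simple connected graph of diameter two whose
girth is at least five (including the acyclic case of infinite girth). Then `G` has no
connected spanning subgraph of diameter three. -/
theorem no_spanning_subgraph_diam_three {V : Type*} [Fintype V] (G : SimpleGraph V)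
    (hG : G.Connected) (hdiam : G.diam = 2) (hgirth : 5 ≤ G.egirth) :
    ¬ ∃ H : SimpleGraph V, H ≤ G ∧ H.Connected ∧ H.diam = 3 := by
  rintro ⟨H, hHG, hHconn, hHdiam⟩
  -- there is an edge of G missing from H
  have hne : ∃ x y, G.Adj x y ∧ ¬ H.Adj x y := by
    by_contra h
    push_neg at h
    have : G ≤ H := fun x y hxy => h x y hxy
    have : H = G := le_antisymm hHG this
    rw [this, hdiam] at hHdiam
    omega
  obtain ⟨x, y, hxy, hnxy⟩ := hne
  -- a shortest path in H from y to x
  obtain ⟨p, hp⟩ := hHconn.exists_walk_length_eq_dist y x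
  have hpPath : p.IsPath := p.isPath_of_length_eq_dist hp
  have hHtop : H.ediam ≠ ⊤ := by
    apply SimpleGraph.ediam_ne_top_of_diam_ne_zero
    omega
  have hlen : p.length ≤ 3 := by
    rw [hp, ← hHdiam]
    exact SimpleGraph.dist_le_diam hHtop
  -- transfer to G
  have hsub : ∀ e ∈ p.edges, e ∈ G.edgeSet := fun e he =>
    SimpleGraph.edgeSet_mono hHG (p.edges_subset_edgeSet he)
  set q := p.transfer G hsub with hq
  have hqPath : q.IsPath := hpPath.transfer hsub
  have hqedges : s(x, y) ∉ q.edges := by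
    rw [hq, SimpleGraph.Walk.edges_transfer]
    intro hmem
    exact hnxy (p.edges_subset_edgeSet hmem)
  have hcyc : (SimpleGraph.Walk.cons hxy q).IsCycle :=
    (SimpleGraph.Walk.cons_isCycle_iff q hxy).mpr ⟨hqPath, hqedges⟩
  have h5 : (5 : ℕ∞) ≤ (SimpleGraph.Walk.cons hxy q).length :=
    SimpleGraph.le_egirth.mp hgirth x _ hcyc
  have hql : q.length = p.length := SimpleGraph.Walk.length_transfer _ _
  rw [SimpleGraph.Walk.length_cons, hql] at h5
  have : (5 : ℕ∞) ≤ ((3 : ℕ) + 1 : ℕ) := le_trans h5 (by exact_mod_cast Nat.add_le_add_right hlen 1)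
  norm_num at this
end
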